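/- arXiv:2103.11049 — 10 statements merged into one kernel-verified Lean document; each statement's English description precedes it below -/
import Mathlib

section
/- Let X, Y, Z be real vector spaces equipped with seminorms p, q, r respectively, let δ ≥ 0, ε > 0, and let f : X → Y and g : X → Z be linear maps satisfying p(x) ≤ q(f(x)) ≤ (1+δ)·p(x) and p(x) ≤ r(g(x)) ≤ (1+δ)·p(x) for all x ∈ X. Define N : Y × Z → ℝ by N(y,z) = inf{ q(u) + r(v) + (δ+ε)·p(x) : x ∈ X, u ∈ Y, v ∈ Z, y = u + f(x), z = v − g(x) }. Then: (1) N is a seminorm on Y × Z; (2) N(y,0) = q(y) for every y ∈ Y; (3) N(0,z) = r(z) for every z ∈ Z; and (4) N(f(x), −g(x)) ≤ (δ+ε)·p(x) for every x ∈ X. -/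
open scoped Pointwise


/-- the amalgamation seminorm on `Y × Z` defined by the infimum formula
is a seminorm extending `q` and `r` and approximately identifying `f` and `g`. -/
theorem stmt_2 {X Y Z : Type*} [AddCommGroup X] [Module ℝ X] [AddCommGroup Y] [Module ℝ Y]
    [AddCommGroup Z] [Module ℝ Z]
    (p : Seminorm ℝ X) (q : Seminorm ℝ Y) (r : Seminorm ℝ Z)
    (δ ε : ℝ) (hδ : 0 ≤ δ) (hε : 0 < ε)
    (f : X →ₗ[ℝ] Y) (g : X →ₗ[ℝ] Z)
    (hf : ∀ x, p x ≤ q (f x) ∧ q (f x) ≤ (1 + δ) * p x)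
    (hg : ∀ x, p x ≤ r (g x) ∧ r (g x) ≤ (1 + δ) * p x)
    (N : Y × Z → ℝ)
    (hN : ∀ w : Y × Z, N w = sInf {t : ℝ | ∃ (x : X) (u : Y) (v : Z),
      w.1 = u + f x ∧ w.2 = v - g x ∧ t = q u + r v + (δ + ε) * p x}) :
    (∀ w, 0 ≤ N w) ∧
      (∀ (c : ℝ) (w : Y × Z), N (c • w) = |c| * N w) ∧
      (∀ w w' : Y × Z, N (w + w') ≤ N w + N w') ∧
      (∀ y : Y, N (y, 0) = q y) ∧
      (∀ z : Z, N (0, z) = r z) ∧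
      (∀ x : X, N (f x, -g x) ≤ (δ + ε) * p x) := by
  set S : Y × Z → Set ℝ := fun w => {t : ℝ | ∃ (x : X) (u : Y) (v : Z),
      w.1 = u + f x ∧ w.2 = v - g x ∧ t = q u + r v + (δ + ε) * p x} with hSdef
  have hNS : ∀ w, N w = sInf (S w) := hN
  have hεp : ∀ x : X, 0 ≤ ε * p x := fun x => mul_nonneg hε.le (apply_nonneg p x)
  have hpos : ∀ w, ∀ t ∈ S w, (0:ℝ) ≤ t := by
    rintro w t ⟨x, u, v, -, -, rfl⟩
    have h1 := apply_nonneg q u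
    have h2 := apply_nonneg r v
    have h3 := apply_nonneg p x
    nlinarith
  have hbdd : ∀ w, BddBelow (S w) := fun w => ⟨0, fun t ht => hpos w t ht⟩
  have hne : ∀ w : Y × Z, (q w.1 + r w.2) ∈ S w := by
    intro w
    exact ⟨0, w.1, w.2, by simp, by simp, by simp⟩
  have hnonneg : ∀ w, 0 ≤ N w := by
    intro w
    rw [hNS]
    exact le_csInf ⟨_, hne w⟩ (hpos w)
  refine ⟨hnonneg, ?_, ?_, ?_, ?_, ?_⟩
  · -- homogeneity
    intro c w
    rcases eq_or_ne c 0 with rfl | hc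
    · simp only [zero_smul, abs_zero, zero_mul]
      rw [hNS]
      refine le_antisymm (csInf_le (hbdd _) ?_) (le_csInf ⟨_, hne _⟩ (hpos _))
      exact ⟨0, 0, 0, by simp, by simp, by simp⟩
    · have hset : S (c • w) = |c| • S w := by
        ext t
        constructor
        · rintro ⟨x, u, v, h1, h2, rfl⟩
          refine Set.mem_smul_set.2 ⟨q (c⁻¹ • u) + r (c⁻¹ • v) + (δ + ε) * p (c⁻¹ • x),
            ⟨c⁻¹ • x, c⁻¹ • u, c⁻¹ • v, ?_, ?_, rfl⟩, ?_⟩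
          · have h1' : c • w.1 = u + f x := h1
            calc w.1 = c⁻¹ • (c • w.1) := (inv_smul_smul₀ hc _).symm
            _ = c⁻¹ • u + f (c⁻¹ • x) := by rw [h1', smul_add, map_smul]
          · have h2' : c • w.2 = v - g x := h2
            calc w.2 = c⁻¹ • (c • w.2) := (inv_smul_smul₀ hc _).symm
            _ = c⁻¹ • v - g (c⁻¹ • x) := by rw [h2', smul_sub, map_smul]
          · simp only [map_smul_eq_mul, Real.norm_eq_abs, abs_inv, smul_eq_mul]
            field_simp
        · rw [Set.mem_smul_set]
          rintro ⟨s, ⟨x, u, v, h1, h2, rfl⟩, rfl⟩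
          refine ⟨c • x, c • u, c • v, ?_, ?_, ?_⟩
          · show c • w.1 = c • u + f (c • x)
            rw [h1, smul_add, map_smul]
          · show c • w.2 = c • v - g (c • x)
            rw [h2, smul_sub, map_smul]
          · simp only [map_smul_eq_mul, Real.norm_eq_abs, smul_eq_mul]
            ring
      rw [hNS, hNS, hset, Real.sInf_smul_of_nonneg (abs_nonneg c), smul_eq_mul]
  · -- triangle inequality
    intro w w'
    have key : ∀ s ∈ S w, ∀ s' ∈ S w', N (w + w') ≤ s + s' := by
      rintro s ⟨x, u, v, h1, h2, rfl⟩ s' ⟨x', u', v', h1', h2', rfl⟩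
      rw [hNS]
      have hmem : q (u + u') + r (v + v') + (δ + ε) * p (x + x') ∈ S (w + w') := by
        refine ⟨x + x', u + u', v + v', ?_, ?_, rfl⟩
        · show w.1 + w'.1 = (u + u') + f (x + x')
          rw [h1, h1', map_add]; abel
        · show w.2 + w'.2 = (v + v') - g (x + x')
          rw [h2, h2', map_add]; abel
      refine le_trans (csInf_le (hbdd _) hmem) ?_
      have t1 := map_add_le_add q u u'
      have t2 := map_add_le_add r v v'
      have t3 := map_add_le_add p x x'
      nlinarith [hεp (x + x'), hε.le, hδ, apply_nonneg p (x + x')]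
    have h1 : ∀ s' ∈ S w', N (w + w') - s' ≤ N w := by
      intro s' hs'
      rw [hNS w]
      exact le_csInf ⟨_, hne w⟩ fun s hs => by linarith [key s hs s' hs']
    have h2 : N (w + w') - N w ≤ N w' := by
      rw [hNS w']
      exact le_csInf ⟨_, hne w'⟩ fun s' hs' => by linarith [h1 s' hs']
    linarith
  · -- N (y, 0) = q y
    intro y
    rw [hNS]
    refine le_antisymm (csInf_le (hbdd _) ⟨0, y, 0, by simp, by simp, by simp⟩)
      (le_csInf ⟨_, hne _⟩ ?_)
    rintro t ⟨x, u, v, h1, h2, rfl⟩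
    simp only at h1 h2
    have hv : v = g x := by
      have := h2.symm
      rwa [sub_eq_zero] at this
    have hq1 : q y ≤ q u + q (f x) := h1 ▸ map_add_le_add q u (f x)
    have h3 := (hf x).2
    have h4 := (hg x).1
    rw [← hv] at h4
    linarith [hεp x]
  · -- N (0, z) = r z
    intro z
    rw [hNS]
    refine le_antisymm (csInf_le (hbdd _) ⟨0, 0, z, by simp, by simp, by simp⟩)
      (le_csInf ⟨_, hne _⟩ ?_)
    rintro t ⟨x, u, v, h1, h2, rfl⟩
    simp only at h1 h2
    have hu : f x = -u := eq_neg_of_add_eq_zero_right h1.symm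
    have hr1 : r z ≤ r v + r (g x) := by
      rw [h2, sub_eq_add_neg]
      calc r (v + -g x) ≤ r v + r (-g x) := map_add_le_add r _ _
      _ = r v + r (g x) := by rw [map_neg_eq_map]
    have h3 := (hg x).2
    have h4 := (hf x).1
    have h5 : q (f x) = q u := by rw [hu, map_neg_eq_map]
    linarith [hεp x]
  · -- N (f x, -g x) ≤ (δ + ε) * p x
    intro x
    rw [hNS]
    exact csInf_le (hbdd _) ⟨x, 0, 0, by simp, by simp, by simp⟩
end

section
/- Fix ε > 0 and δ ≥ 0. Let X, Y, Z be finite-dimensional real vector spaces equipped with seminorm families (p_k)_{k<l}, (q_k)_{k<m}, (r_k)_{k<m'} respectively, where 1 ≤ l ≤ m ≤ m' < ω, and let f : X → Y and g : X → Z be multi-δ-isometric embeddings. Then there exist a finite-dimensional real vector space W equipped with a finite separating seminorm family (s_k)_{k<m''} with m'' ≥ m', and injective linear maps i : Y → W and j : Z → W, such that s_k(i(y)) = q_k(y) for all y ∈ Y and k < m, s_k(j(z)) = r_k(z) for all z ∈ Z and k < m', and for every k < l and every x ∈ X with p_k(x) ≤ 1 one has s_k(i(f(x)) − j(g(x)))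 ≤ 2δ + ε. Moreover, if the seminorm families of X, Y and Z are nondecreasing (graded), then W and its family (s_k) can be chosen so that (s_k) is nondecreasing. -/
/-!
The amalgam is `Y × Z`. For `k < l` its `k`-th seminorm is
`w ↦ ⨅ x, c * p k x + q k (w.1 - f x) + r k (w.2 + g x)` with `c = 2δ + ε`, which makes
`(f x, 0) - (0, g x)` of size at most `c * p k x`. Since `1 + δ - (1 + δ)⁻¹ ≤ 2δ`, the
δ-isometry bounds give `q k (f x) ≤ r k (g x) + c * p k x` and symmetrically, so this infimum
still restricts to `q k` on `Y` and to `r k` on `Z`. From `l` on the amalgam carries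
`q k (w.1) + r k (w.2)` with indices clamped below `m` and `m'`, which keeps the family graded,
and a norm added from index `m'` on makes it separating.
-/

/-- A real vector space equipped with an `ℕ`-indexed family of seminorms (of which an
initial segment will be regarded as the relevant seminorm family). -/
structure MultiSemiSpace where
  carrier : Type
  [grp : AddCommGroup carrier]
  [mod : Module ℝ carrier]
  sem : ℕ → Seminorm ℝ carrier

attribute [instance] MultiSemiSpace.grp MultiSemiSpace.mod

open scoped NNReal

namespace Seminorm

section Glue

variable {V X : Type*} [AddCommGroup V] [Module ℝ V] [AddCommGroup X] [Module ℝ X]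

/-- For a left inverse `π` of `D` this is `w ↦ ⨅ x, P x + A (w - D x)`, written as an infimal
convolution with `A` so that `⊓` provides the seminorm axioms: the first summand equals `P` along
`D`, and off the range of `D` it costs at least the way through that range. -/
noncomputable def glue (A : Seminorm ℝ V) (D : X →ₗ[ℝ] V) (π : V →ₗ[ℝ] X) (P : Seminorm ℝ X) :
    Seminorm ℝ V :=
  (P.comp π + A.comp (LinearMap.id - D ∘ₗ π)) ⊓ A

variable {A A' : Seminorm ℝ V} {D : X →ₗ[ℝ] V} {π : V →ₗ[ℝ] X} {P P' : Seminorm ℝ X}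

theorem glue_le : glue A D π P ≤ A := inf_le_right

theorem glue_apply_map_le (hπ : π ∘ₗ D = LinearMap.id) (x : X) : glue A D π P (D x) ≤ P x := by
  have hπx : π (D x) = x := LinearMap.congr_fun hπ x
  calc glue A D π P (D x) ≤ (P.comp π + A.comp (LinearMap.id - D ∘ₗ π) : Seminorm ℝ V) (D x) :=
        le_def.1 inf_le_left _
    _ = P x := by simp [hπx]

theorem le_glue_apply {w : V} {t : ℝ} (h : ∀ x, t ≤ P x + A (w - D x)) : t ≤ glue A D π P w := by
  rw [glue, inf_apply]
  refine le_ciInf fun u => (h (π u)).trans ?_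
  calc P (π u) + A (w - D (π u)) = P (π u) + A ((u - D (π u)) + (w - u)) := by
        rw [sub_add_sub_cancel']
    _ ≤ P (π u) + (A (u - D (π u)) + A (w - u)) := by gcongr; exact map_add_le_add _ _ _
    _ = _ := by simp [add_assoc]

theorem glue_mono (hA : A ≤ A') (hP : P ≤ P') : glue A D π P ≤ glue A' D π P' := by
  unfold glue
  gcongr
  exacts [comp_mono _ hP, comp_mono _ hA]

end Glue

section Prod

variable {Y Z : Type*} [AddCommGroup Y] [Module ℝ Y] [AddCommGroup Z] [Module ℝ Z]

noncomputable def prod (q : Seminorm ℝ Y) (r : Seminorm ℝ Z) : Seminorm ℝ (Y × Z) :=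
  q.comp (LinearMap.fst ℝ Y Z) + r.comp (LinearMap.snd ℝ Y Z)

@[simp]
theorem prod_apply (q : Seminorm ℝ Y) (r : Seminorm ℝ Z) (w : Y × Z) :
    q.prod r w = q w.1 + r w.2 :=
  rfl

theorem prod_mono {q q' : Seminorm ℝ Y} {r r' : Seminorm ℝ Z} (hq : q ≤ q') (hr : r ≤ r') :
    q.prod r ≤ q'.prod r' := by
  unfold prod
  gcongr
  exacts [comp_mono _ hq, comp_mono _ hr]

end Prod

section Amalgam

variable {X Y Z : Type*} [AddCommGroup X] [Module ℝ X] [AddCommGroup Y] [Module ℝ Y]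
  [AddCommGroup Z] [Module ℝ Z] {f : X →ₗ[ℝ] Y} {g : X →ₗ[ℝ] Z} {π : Y × Z →ₗ[ℝ] X}
  {p : Seminorm ℝ X} {q : Seminorm ℝ Y} {r : Seminorm ℝ Z}

theorem glue_prod_apply_inl (hq : ∀ x, q (f x) ≤ r (g x) + p x) (y : Y) :
    glue (q.prod r) (f.prod (-g)) π p (y, 0) = q y := by
  refine le_antisymm ((le_def.1 glue_le _).trans (by simp)) (le_glue_apply fun x => ?_)
  calc q y ≤ q (f x) + q (y - f x) := le_map_add_map_sub q _ _
    _ ≤ r (g x) + p x + q (y - f x) := by gcongr; exact hq x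
    _ = p x + q.prod r ((y, 0) - f.prod (-g) x) := by
      simp only [LinearMap.prod_apply, LinearMap.coe_neg, Function.prod_apply, Pi.neg_apply,
        Prod.mk_sub_mk, sub_neg_eq_add, zero_add, prod_apply]
      ring

theorem glue_prod_apply_inr (hr : ∀ x, r (g x) ≤ q (f x) + p x) (z : Z) :
    glue (q.prod r) (f.prod (-g)) π p (0, z) = r z := by
  refine le_antisymm ((le_def.1 glue_le _).trans (by simp)) (le_glue_apply fun x => ?_)
  calc r z ≤ r (-g x) + r (z - -g x) := le_map_add_map_sub r _ _
    _ ≤ q (f x) + p x + r (z + g x) := by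
      rw [map_neg_eq_map, sub_neg_eq_add]; gcongr; exact hr x
    _ = p x + q.prod r ((0, z) - f.prod (-g) x) := by
      simp only [LinearMap.prod_apply, LinearMap.coe_neg, Function.prod_apply, Pi.neg_apply,
        Prod.mk_sub_mk, zero_sub, sub_neg_eq_add, prod_apply, map_neg_eq_map]
      ring

theorem glue_prod_apply_sub_le (hπ : π ∘ₗ f.prod (-g) = LinearMap.id) (x : X) :
    glue (q.prod r) (f.prod (-g)) π p ((f x, 0) - (0, g x)) ≤ p x := by
  have hD : ((f x, 0) - (0, g x) : Y × Z) = f.prod (-g) x := by simp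
  exact hD ▸ glue_apply_map_le hπ x

end Amalgam

end Seminorm

open Seminorm

theorem monotone_min_pred {β : Type*} [Preorder β] {m : ℕ} {q : ℕ → β}
    (hq : ∀ k, k + 1 < m → q k ≤ q (k + 1)) : Monotone fun k => q (min k (m - 1)) := by
  refine monotone_nat_of_le_succ fun k => ?_
  by_cases hk : k + 1 < m
  · rw [min_eq_left (by omega), min_eq_left (by omega)]
    exact hq k hk
  · rw [min_eq_right (by omega), min_eq_right (by omega)]

section AmalgamFamily

variable {X Y Z : Type*} [AddCommGroup X] [Module ℝ X] [AddCommGroup Y] [Module ℝ Y]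
  [AddCommGroup Z] [Module ℝ Z] (f : X →ₗ[ℝ] Y) (g : X →ₗ[ℝ] Z) (π : Y × Z →ₗ[ℝ] X)
  (l m m' : ℕ) (p : ℕ → Seminorm ℝ X) (q : ℕ → Seminorm ℝ Y) (r : ℕ → Seminorm ℝ Z)

noncomputable def amalgamSeminorm (k : ℕ) : Seminorm ℝ (Y × Z) :=
  if k < l then glue ((q k).prod (r k)) (f.prod (-g)) π (p k)
  else (q (min k (m - 1))).prod (r (min k (m' - 1)))

variable {f g π l m m' p q r}

theorem amalgamSeminorm_apply_inl (hq : ∀ k < l, ∀ x, q k (f x) ≤ r k (g x) + p k x)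
    {k : ℕ} (hk : k < m) (y : Y) : amalgamSeminorm f g π l m m' p q r k (y, 0) = q k y := by
  unfold amalgamSeminorm
  split_ifs with hkl
  · exact glue_prod_apply_inl (hq k hkl) y
  · simp [min_eq_left (show k ≤ m - 1 by omega)]

theorem amalgamSeminorm_apply_inr (hr : ∀ k < l, ∀ x, r k (g x) ≤ q k (f x) + p k x)
    {k : ℕ} (hk : k < m') (z : Z) : amalgamSeminorm f g π l m m' p q r k (0, z) = r k z := by
  unfold amalgamSeminorm
  split_ifs with hkl
  · exact glue_prod_apply_inr (hr k hkl) z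
  · simp [min_eq_left (show k ≤ m' - 1 by omega)]

theorem amalgamSeminorm_apply_sub_le (hπ : π ∘ₗ f.prod (-g) = LinearMap.id) {k : ℕ} (hk : k < l)
    (x : X) : amalgamSeminorm f g π l m m' p q r k ((f x, 0) - (0, g x)) ≤ p k x := by
  rw [amalgamSeminorm, if_pos hk]
  exact glue_prod_apply_sub_le hπ x

theorem monotone_amalgamSeminorm (hlm : l ≤ m) (hmm' : m ≤ m')
    (hp : ∀ k, k + 1 < l → p k ≤ p (k + 1)) (hq : ∀ k, k + 1 < m → q k ≤ q (k + 1))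
    (hr : ∀ k, k + 1 < m' → r k ≤ r (k + 1)) : Monotone (amalgamSeminorm f g π l m m' p q r) := by
  have hq' := monotone_min_pred hq
  have hr' := monotone_min_pred hr
  refine monotone_nat_of_le_succ fun k => ?_
  unfold amalgamSeminorm
  split_ifs with hk hk' hk'
  · exact glue_mono (prod_mono (hq k (by omega)) (hr k (by omega))) (hp k hk')
  · refine glue_le.trans (prod_mono ?_ ?_)
    · simpa [min_eq_left (show k ≤ m - 1 by omega)] using hq' k.le_succ
    · simpa [min_eq_left (show k ≤ m' - 1 by omega)] using hr' k.le_succ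
  · omega
  · exact prod_mono (hq' k.le_succ) (hr' k.le_succ)

end AmalgamFamily

theorem le_add_mul_of_le_mul_of_inv_mul_le {δ ε a b t : ℝ} (hδ : 0 ≤ δ) (hε : 0 ≤ ε)
    (ht : 0 ≤ t) (ha : a ≤ (1 + δ) * t) (hb : (1 + δ)⁻¹ * t ≤ b) :
    a ≤ b + (2 * δ + ε) * t := by
  have hinv : 1 - δ ≤ (1 + δ)⁻¹ := by
    have := mul_inv_cancel₀ (show 1 + δ ≠ 0 by positivity)
    nlinarith [inv_nonneg.2 (show 0 ≤ 1 + δ by positivity)]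
  nlinarith [mul_le_mul_of_nonneg_right hinv ht]

section SeparatedCoordinates

variable {V : Type*} [AddCommGroup V] [Module ℝ V] [FiniteDimensional ℝ V]
  (s : ℕ → Seminorm ℝ V) (n : ℕ)

/-- Coordinates put the carrier in `Type`; adding the sup norm from index `n` on makes the
family separating without changing it below `n`. -/
noncomputable def separatedCoordFamily (k : ℕ) : Seminorm ℝ (Fin (Module.finrank ℝ V) → ℝ) :=
  (s k).comp (Module.finBasis ℝ V).equivFun.symm.toLinearMap +
    if n ≤ k then normSeminorm ℝ _ else 0

variable {s n}

theorem separatedCoordFamily_equivFun {k : ℕ} (hk : k < n) (v : V) :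
    separatedCoordFamily s n k ((Module.finBasis ℝ V).equivFun v) = s k v := by
  simp [separatedCoordFamily, if_neg (show ¬n ≤ k by omega)]

theorem separatedCoordFamily_ne_zero {w : Fin (Module.finrank ℝ V) → ℝ} (hw : w ≠ 0) :
    separatedCoordFamily s n n w ≠ 0 := by
  have hw' : 0 < ‖w‖ := norm_pos_iff.2 hw
  simp only [separatedCoordFamily, le_refl, if_true, add_apply, comp_apply, coe_normSeminorm]
  positivity

theorem monotone_separatedCoordFamily (hs : Monotone s) :
    Monotone (separatedCoordFamily s n) := by
  intro a b hab
  unfold separatedCoordFamily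
  gcongr
  · exact comp_mono _ (hs hab)
  · split_ifs <;> first | omega | exact le_rfl | exact bot_le

end SeparatedCoordinates

theorem stmt_3_general {X Y Z : Type*} [AddCommGroup X] [Module ℝ X] [AddCommGroup Y] [Module ℝ Y]
    [AddCommGroup Z] [Module ℝ Z]
    [FiniteDimensional ℝ Y] [FiniteDimensional ℝ Z]
    (ε δ : ℝ) (hε : 0 < ε) (hδ : 0 ≤ δ)
    (l m m' : ℕ) (hlm : l ≤ m) (hmm' : m ≤ m')
    (p : ℕ → Seminorm ℝ X) (q : ℕ → Seminorm ℝ Y) (r : ℕ → Seminorm ℝ Z)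
    (f : X →ₗ[ℝ] Y) (hfinj : Function.Injective f)
    (hf : ∀ k < l, ∀ x, (1 + δ)⁻¹ * p k x ≤ q k (f x) ∧ q k (f x) ≤ (1 + δ) * p k x)
    (g : X →ₗ[ℝ] Z)
    (hg : ∀ k < l, ∀ x, (1 + δ)⁻¹ * p k x ≤ r k (g x) ∧ r k (g x) ≤ (1 + δ) * p k x) :
    ∃ (W : MultiSemiSpace) (m'' : ℕ), FiniteDimensional ℝ W.carrier ∧ m' ≤ m'' ∧
      (∀ w : W.carrier, w ≠ 0 → ∃ k < m'', W.sem k w ≠ 0) ∧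
      ∃ (i : Y →ₗ[ℝ] W.carrier) (j : Z →ₗ[ℝ] W.carrier),
        Function.Injective i ∧ Function.Injective j ∧
        (∀ k < m, ∀ y, W.sem k (i y) = q k y) ∧
        (∀ k < m', ∀ z, W.sem k (j z) = r k z) ∧
        (∀ k < l, ∀ x, p k x ≤ 1 → W.sem k (i (f x) - j (g x)) ≤ 2 * δ + ε) ∧
        (((∀ k, k + 1 < l → ∀ x, p k x ≤ p (k + 1) x) ∧
            (∀ k, k + 1 < m → ∀ y, q k y ≤ q (k + 1) y) ∧
            (∀ k, k + 1 < m' → ∀ z, r k z ≤ r (k + 1) z)) →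
          ∀ k, k + 1 < m'' → ∀ w, W.sem k w ≤ W.sem (k + 1) w) := by
  obtain ⟨π, hπ⟩ := (f.prod (-g)).exists_leftInverse_of_injective
    (LinearMap.ker_eq_bot.2 fun a b hab => hfinj (congrArg Prod.fst hab))
  let c : ℝ≥0 := ⟨2 * δ + ε, by positivity⟩
  let s := amalgamSeminorm f g π l m m' (fun k => c • p k) q r
  let e := (Module.finBasis ℝ (Y × Z)).equivFun
  have hfg : ∀ k < l, ∀ x, q k (f x) ≤ r k (g x) + (c • p k) x := fun k hk x =>
    le_add_mul_of_le_mul_of_inv_mul_le hδ hε.le (apply_nonneg _ _) (hf k hk x).2 (hg k hk x).1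
  have hgf : ∀ k < l, ∀ x, r k (g x) ≤ q k (f x) + (c • p k) x := fun k hk x =>
    le_add_mul_of_le_mul_of_inv_mul_le hδ hε.le (apply_nonneg _ _) (hg k hk x).2 (hf k hk x).1
  refine ⟨⟨_, separatedCoordFamily s m'⟩, m' + 1, inferInstance, by omega,
    fun w hw => ⟨m', by omega, separatedCoordFamily_ne_zero hw⟩,
    e.toLinearMap ∘ₗ LinearMap.inl ℝ Y Z, e.toLinearMap ∘ₗ LinearMap.inr ℝ Y Z,
    e.injective.comp LinearMap.inl_injective, e.injective.comp LinearMap.inr_injective,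
    fun k hk y => ?_, fun k hk z => ?_, fun k hk x hx => ?_, ?_⟩
  · exact (separatedCoordFamily_equivFun (by omega) _).trans (amalgamSeminorm_apply_inl hfg hk y)
  · exact (separatedCoordFamily_equivFun (by omega) _).trans (amalgamSeminorm_apply_inr hgf hk z)
  · calc _ = s k ((f x, 0) - (0, g x)) :=
          (map_sub e _ _).symm ▸ separatedCoordFamily_equivFun (by omega) _
      _ ≤ c * p k x := amalgamSeminorm_apply_sub_le hπ hk x
      _ ≤ 2 * δ + ε := mul_le_of_le_one_right c.2 hx
  · rintro ⟨hp, hq, hr⟩ k - w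
    refine le_def.1 (monotone_separatedCoordFamily (monotone_amalgamSeminorm hlm hmm' ?_ ?_ ?_)
      k.le_succ) w
    · exact fun k hk => IsOrderedSMul.smul_le_smul_left _ _ (le_def.2 (hp k hk)) c
    · exact fun k hk => le_def.2 (hq k hk)
    · exact fun k hk => le_def.2 (hr k hk)

/-- near amalgamation with modulus `2δ` for finite-dimensional
multi-seminormed spaces of finite lengths `l ≤ m ≤ m'`, with a separated amalgam,
which can moreover be chosen graded when the given spaces are graded. -/
theorem stmt_3 {X Y Z : Type*} [AddCommGroup X] [Module ℝ X] [AddCommGroup Y] [Module ℝ Y]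
    [AddCommGroup Z] [Module ℝ Z]
    [FiniteDimensional ℝ X] [FiniteDimensional ℝ Y] [FiniteDimensional ℝ Z]
    (ε δ : ℝ) (hε : 0 < ε) (hδ : 0 ≤ δ)
    (l m m' : ℕ) (hl : 1 ≤ l) (hlm : l ≤ m) (hmm' : m ≤ m')
    (p : ℕ → Seminorm ℝ X) (q : ℕ → Seminorm ℝ Y) (r : ℕ → Seminorm ℝ Z)
    (f : X →ₗ[ℝ] Y) (hfinj : Function.Injective f)
    (hf : ∀ k < l, ∀ x, (1 + δ)⁻¹ * p k x ≤ q k (f x) ∧ q k (f x) ≤ (1 + δ) * p k x)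
    (g : X →ₗ[ℝ] Z) (hginj : Function.Injective g)
    (hg : ∀ k < l, ∀ x, (1 + δ)⁻¹ * p k x ≤ r k (g x) ∧ r k (g x) ≤ (1 + δ) * p k x) :
    ∃ (W : MultiSemiSpace) (m'' : ℕ), FiniteDimensional ℝ W.carrier ∧ m' ≤ m'' ∧
      (∀ w : W.carrier, w ≠ 0 → ∃ k < m'', W.sem k w ≠ 0) ∧
      ∃ (i : Y →ₗ[ℝ] W.carrier) (j : Z →ₗ[ℝ] W.carrier),
        Function.Injective i ∧ Function.Injective j ∧
        (∀ k < m, ∀ y, W.sem k (i y) = q k y) ∧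
        (∀ k < m', ∀ z, W.sem k (j z) = r k z) ∧
        (∀ k < l, ∀ x, p k x ≤ 1 → W.sem k (i (f x) - j (g x)) ≤ 2 * δ + ε) ∧
        (((∀ k, k + 1 < l → ∀ x, p k x ≤ p (k + 1) x) ∧
            (∀ k, k + 1 < m → ∀ y, q k y ≤ q (k + 1) y) ∧
            (∀ k, k + 1 < m' → ∀ z, r k z ≤ r (k + 1) z)) →
          ∀ k, k + 1 < m'' → ∀ w, W.sem k w ≤ W.sem (k + 1) w) :=
  stmt_3_general ε δ hε hδ l m m' hlm hmm' p q r f hfinj hf g hg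
end

section
/- Let X, Y, Z be finite-dimensional real vector spaces equipped with ω-indexed separating seminorm families (p_k)_{k<ω}, (q_k)_{k<ω}, (r_k)_{k<ω} respectively, let n < ω, and let f : X → Y and g : X → Z be injective linear maps with q_k(f(x)) = p_k(x) and r_k(g(x)) = p_k(x) for all x ∈ X and all k < n. Then for every ε > 0 there exist a finite-dimensional real vector space W equipped with an ω-indexed seminorm family (s_k)_{k<ω}, and injective linear maps i : Y → W and j : Z → W with s_k(i(y)) = q_k(y) and s_k(j(z)) = r_k(z) for all y ∈ Y, z ∈ Z and all k < ω, such that for every k < n and every x ∈ X with p_k(x) ≤ 1 one has s_k(i(f(x)) − j(g(x))) ≤ ε. Moreover, if the families on X, Y and Z are nondecreasing (graded), then W can be chosen with a nondecreasing family. -/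
section Amalg

variable {X Y Z : Type*} [AddCommGroup X] [Module ℝ X] [AddCommGroup Y] [Module ℝ Y]
    [AddCommGroup Z] [Module ℝ Z]

/-- The infimal-convolution amalgam seminorm on `Y × Z`. -/
noncomputable def amalgSem (p : Seminorm ℝ X) (q : Seminorm ℝ Y) (r : Seminorm ℝ Z)
    (f : X →ₗ[ℝ] Y) (g : X →ₗ[ℝ] Z) (ε : ℝ) (hε : 0 ≤ ε) : Seminorm ℝ (Y × Z) := by
  refine Seminorm.ofSMulLE
    (fun v => ⨅ x : X, (q (v.1 - f x) + r (v.2 + g x) + ε * p x)) ?_ ?_ ?_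
  · refine le_antisymm (le_of_le_of_eq (ciInf_le ⟨0, ?_⟩ 0) ?_) (le_ciInf fun x => by positivity)
    · rintro _ ⟨x, rfl⟩; positivity
    · simp
  · intro v w
    refine le_ciInf_add_ciInf fun a b => ?_
    refine ciInf_le_of_le ⟨0, by rintro _ ⟨x, rfl⟩; positivity⟩ (a + b) ?_
    have h1 : (v + w).1 - f (a + b) = (v.1 - f a) + (w.1 - f b) := by
      simp only [map_add, Prod.fst_add]; abel
    have h2 : (v + w).2 + g (a + b) = (v.2 + g a) + (w.2 + g b) := by
      simp only [map_add, Prod.snd_add]; abel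
    rw [h1, h2]
    calc q ((v.1 - f a) + (w.1 - f b)) + r ((v.2 + g a) + (w.2 + g b)) + ε * p (a + b)
        ≤ (q (v.1 - f a) + q (w.1 - f b)) + (r (v.2 + g a) + r (w.2 + g b))
            + ε * (p a + p b) := by gcongr <;> apply map_add_le_add
      _ = q (v.1 - f a) + r (v.2 + g a) + ε * p a + (q (w.1 - f b) + r (w.2 + g b) + ε * p b) :=
        by ring
  · intro c v
    rcases eq_or_ne c 0 with rfl | hc
    · simp only [zero_smul, norm_zero, zero_mul]
      refine le_trans (ciInf_le ⟨0, by rintro _ ⟨x, rfl⟩; positivity⟩ 0) ?_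
      simp
    · show (⨅ x : X, _) ≤ ‖c‖ * ⨅ x : X, _
      rw [mul_comm, Real.iInf_mul_of_nonneg (norm_nonneg c)]
      refine le_ciInf fun x => ?_
      refine ciInf_le_of_le ⟨0, by rintro _ ⟨x, rfl⟩; positivity⟩ (c • x) (le_of_eq ?_)
      have h1 : (c • v).1 - f (c • x) = c • (v.1 - f x) := by
        simp [map_smul, smul_sub]
      have h2 : (c • v).2 + g (c • x) = c • (v.2 + g x) := by
        simp [map_smul, smul_add]
      rw [h1, h2, map_smul_eq_mul, map_smul_eq_mul, map_smul_eq_mul]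
      ring

variable {p : Seminorm ℝ X} {q : Seminorm ℝ Y} {r : Seminorm ℝ Z}
    {f : X →ₗ[ℝ] Y} {g : X →ₗ[ℝ] Z} {ε : ℝ} {hε : 0 ≤ ε}

lemma amalgSem_apply (v : Y × Z) :
    amalgSem p q r f g ε hε v = ⨅ x : X, (q (v.1 - f x) + r (v.2 + g x) + ε * p x) := rfl

include hε in
lemma amalgSem_bdd (v : Y × Z) :
    BddBelow (Set.range fun x : X => q (v.1 - f x) + r (v.2 + g x) + ε * p x) :=
  ⟨0, by rintro _ ⟨x, rfl⟩; positivity⟩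

lemma amalgSem_le_apply (v : Y × Z) (x : X) :
    amalgSem p q r f g ε hε v ≤ q (v.1 - f x) + r (v.2 + g x) + ε * p x :=
  ciInf_le (amalgSem_bdd (hε := hε) v) x

lemma amalgSem_fst (hfq : ∀ x, q (f x) = p x) (hgr : ∀ x, r (g x) = p x) (y : Y) :
    amalgSem p q r f g ε hε (y, 0) = q y := by
  refine le_antisymm (le_trans (amalgSem_le_apply (y, 0) 0) (by simp)) (le_ciInf fun x => ?_)
  have : q y ≤ q (y - f x) + q (f x) := by
    simpa using map_add_le_add q (y - f x) (f x)
  calc q y ≤ q (y - f x) + q (f x) := this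
    _ ≤ q ((y, (0:Z)).1 - f x) + r ((y, (0:Z)).2 + g x) + ε * p x := by
        have h2 : q y ≤ q (y - f x) + p x := by rw [← hfq x]; exact this
        have h3 : (0:ℝ) ≤ ε * p x := by positivity
        simp only [hgr, zero_add]
        linarith [hfq x]
    _ = _ := rfl

lemma amalgSem_snd (hfq : ∀ x, q (f x) = p x) (hgr : ∀ x, r (g x) = p x) (z : Z) :
    amalgSem p q r f g ε hε (0, z) = r z := by
  refine le_antisymm (le_trans (amalgSem_le_apply (0, z) 0) (by simp)) (le_ciInf fun x => ?_)
  have : r z ≤ r (z + g x) + r (g x) := by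
    simpa using map_add_le_add r (z + g x) (-g x)
  calc r z ≤ r (z + g x) + r (g x) := this
    _ ≤ q (((0:Y), z).1 - f x) + r (((0:Y), z).2 + g x) + ε * p x := by
        have h2 : r z ≤ r (z + g x) + p x := by rw [← hgr x]; exact this
        have h3 : (0:ℝ) ≤ ε * p x := by positivity
        simp only [hfq, zero_sub, map_neg_eq_map]
        linarith [hgr x]
    _ = _ := rfl

lemma amalgSem_near (x : X) :
    amalgSem p q r f g ε hε (f x, -g x) ≤ ε * p x := by
  refine le_trans (amalgSem_le_apply (f x, -g x) x) ?_
  simp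

lemma amalgSem_mono {p' : Seminorm ℝ X} {q' : Seminorm ℝ Y} {r' : Seminorm ℝ Z} {hε' : 0 ≤ ε}
    (hp : ∀ x, p x ≤ p' x) (hq : ∀ y, q y ≤ q' y) (hr : ∀ z, r z ≤ r' z) (v : Y × Z) :
    amalgSem p q r f g ε hε v ≤ amalgSem p' q' r' f g ε hε' v := by
  refine le_ciInf fun x => le_trans (amalgSem_le_apply v x) ?_
  gcongr
  · exact hq _
  · exact hr _
  · exact hp _

lemma amalgSem_le_sum (v : Y × Z) :
    amalgSem p q r f g ε hε v ≤ q v.1 + r v.2 := by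
  refine le_trans (amalgSem_le_apply v 0) ?_
  simp

end Amalg

/-- near amalgamation of multi-isometric `n`-embeddings between
finite-dimensional separated spaces with ω-indexed seminorm families, with a graded
amalgam when the given spaces are graded. -/
theorem stmt_4 {X Y Z : Type*} [AddCommGroup X] [Module ℝ X] [AddCommGroup Y] [Module ℝ Y]
    [AddCommGroup Z] [Module ℝ Z]
    [FiniteDimensional ℝ X] [FiniteDimensional ℝ Y] [FiniteDimensional ℝ Z]
    (p : ℕ → Seminorm ℝ X) (q : ℕ → Seminorm ℝ Y) (r : ℕ → Seminorm ℝ Z)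
    (hpsep : ∀ x : X, x ≠ 0 → ∃ k, p k x ≠ 0)
    (hqsep : ∀ y : Y, y ≠ 0 → ∃ k, q k y ≠ 0)
    (hrsep : ∀ z : Z, z ≠ 0 → ∃ k, r k z ≠ 0)
    (n : ℕ)
    (f : X →ₗ[ℝ] Y) (hfinj : Function.Injective f)
    (hf : ∀ k < n, ∀ x, q k (f x) = p k x)
    (g : X →ₗ[ℝ] Z) (hginj : Function.Injective g)
    (hg : ∀ k < n, ∀ x, r k (g x) = p k x)
    (ε : ℝ) (hε : 0 < ε) :
    ∃ W : MultiSemiSpace, FiniteDimensional ℝ W.carrier ∧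
      ∃ (i : Y →ₗ[ℝ] W.carrier) (j : Z →ₗ[ℝ] W.carrier),
        Function.Injective i ∧ Function.Injective j ∧
        (∀ (k : ℕ) (y : Y), W.sem k (i y) = q k y) ∧
        (∀ (k : ℕ) (z : Z), W.sem k (j z) = r k z) ∧
        (∀ k < n, ∀ x, p k x ≤ 1 → W.sem k (i (f x) - j (g x)) ≤ ε) ∧
        (((∀ (k : ℕ) (x : X), p k x ≤ p (k + 1) x) ∧
            (∀ (k : ℕ) (y : Y), q k y ≤ q (k + 1) y) ∧
            (∀ (k : ℕ) (z : Z), r k z ≤ r (k + 1) z)) →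
          ∀ (k : ℕ) (w : W.carrier), W.sem k w ≤ W.sem (k + 1) w) := by
  classical
  -- the seminorm family on `Y × Z`
  set S : ℕ → Seminorm ℝ (Y × Z) := fun k =>
    if k < n then amalgSem (p k) (q k) (r k) f g ε hε.le
    else (q k).comp (LinearMap.fst ℝ Y Z) + (r k).comp (LinearMap.snd ℝ Y Z) with hS
  -- a `Type 0` copy of `Y × Z`
  set d := Module.finrank ℝ (Y × Z) with hd
  let e : (Y × Z) ≃ₗ[ℝ] (Fin d → ℝ) := (Module.finBasis ℝ (Y × Z)).equivFun
  refine ⟨⟨Fin d → ℝ, fun k => (S k).comp e.symm.toLinearMap⟩, ?_, ?_⟩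
  · exact inferInstanceAs (FiniteDimensional ℝ (Fin d → ℝ))
  refine ⟨e.toLinearMap ∘ₗ LinearMap.inl ℝ Y Z, e.toLinearMap ∘ₗ LinearMap.inr ℝ Y Z,
    ?_, ?_, ?_, ?_, ?_, ?_⟩
  · intro a b hab
    have := e.injective hab
    simpa using congrArg Prod.fst this
  · intro a b hab
    have := e.injective hab
    simpa using congrArg Prod.snd this
  · intro k y
    show (S k).comp e.symm.toLinearMap (e (y, 0)) = q k y
    rw [Seminorm.comp_apply]
    simp only [LinearEquiv.coe_coe, LinearEquiv.symm_apply_apply]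
    by_cases hk : k < n
    · simp only [hS, if_pos hk]
      exact amalgSem_fst (hf k hk) (hg k hk) y
    · simp [hS, if_neg hk]
  · intro k z
    show (S k).comp e.symm.toLinearMap (e ((0:Y), z)) = r k z
    rw [Seminorm.comp_apply]
    simp only [LinearEquiv.coe_coe, LinearEquiv.symm_apply_apply]
    by_cases hk : k < n
    · simp only [hS, if_pos hk]
      exact amalgSem_snd (hf k hk) (hg k hk) z
    · simp [hS, if_neg hk]
  · intro k hk x hx
    have h1 : e (f x, (0:Z)) - e ((0:Y), g x) = e (f x, -g x) := by
      rw [← map_sub]; congr 1; simp [Prod.ext_iff]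
    show (S k).comp e.symm.toLinearMap (e (f x, 0) - e (0, g x)) ≤ ε
    rw [h1, Seminorm.comp_apply]
    simp only [LinearEquiv.coe_coe, LinearEquiv.symm_apply_apply]
    simp only [hS, if_pos hk]
    calc amalgSem (p k) (q k) (r k) f g ε hε.le (f x, -g x) ≤ ε * p k x := amalgSem_near x
      _ ≤ ε * 1 := by gcongr
      _ = ε := mul_one ε
  · rintro ⟨hp, hq, hr⟩ k w
    show S k (e.symm w) ≤ S (k + 1) (e.symm w)
    set v := e.symm w
    by_cases hk1 : k + 1 < n
    · have hk : k < n := by omega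
      simp only [hS, if_pos hk, if_pos hk1]
      exact amalgSem_mono (hp k) (hq k) (hr k) v
    · by_cases hk : k < n
      · simp only [hS, if_pos hk, if_neg hk1]
        calc amalgSem (p k) (q k) (r k) f g ε hε.le v ≤ q k v.1 + r k v.2 := amalgSem_le_sum v
          _ ≤ q (k+1) v.1 + r (k+1) v.2 := by gcongr; exacts [hq k v.1, hr k v.2]
          _ = _ := by simp [Seminorm.comp_apply]
      · simp only [hS, if_neg hk, if_neg hk1]
        simp only [Seminorm.add_apply, Seminorm.comp_apply]
        gcongr
        · exact hq k _
        · exact hr k _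
end

section
/- Let λ ≤ ω and let E and F be real vector spaces equipped with separating seminorm families (P_k)_{k<λ} and (Q_k)_{k<λ} of the same length λ, such that E and F are each separable and complete with respect to the topology induced by their seminorm family (i.e. they are separable Fréchet spaces with fundamental systems of seminorms (P_k) and (Q_k)). Assume both E and F are approximately ultrahomogeneous, and that their ages are equivalent: for every finite-dimensional subspace X ⊆ E and every l ≤ λ with l < ω or l = λ, there is an injective linear map φ : X → F with Q_k(φ(x)) = P_k(x) for all x ∈ X and k < l, and symmetrically with the roles of E and F exchanged. Then E and F are multi-isometric: there exists a linear bijection T : E → F with Q_k(T(x)) = P_k(x) for all x ∈ E and all k < λ. -/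
/-! Approximate back-and-forth. Starting from the zero map, the equivalence of ages alternately
embeds the current finite-dimensional domain (enlarged by the next point of a dense sequence of `E`)
into `F` and the current range (enlarged by the first points of a dense sequence of `F`) into `E`;
approximate ultrahomogeneity corrects each new embedding so that it moves the previous partial
isometry by at most `2⁻ⁿ`. The partial isometries therefore converge on the union of their domains,
which is dense, and the limit extends by completeness of `F` to an isometry `E → F`. Its range is
dense, since every point of the dense sequence of `F` is approximately reached, and it is closed by
completeness of `E`, so the isometry is onto. -/

/-- Approximate ultrahomogeneity of a space `E` with a separating seminorm family
`(P k)_{k < lam}`, `lam ≤ ω` (`lam : ℕ∞`, with only the seminorms `P k` for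
`(k : ℕ∞) < lam` regarded as part of the structure). -/
def ApproxUltraHomog (E : Type) [AddCommGroup E] [Module ℝ E]
    (P : ℕ → Seminorm ℝ E) (lam : ℕ∞) : Prop :=
  ∀ X : Submodule ℝ E, FiniteDimensional ℝ X →
    ∀ l : ℕ∞, l ≤ lam →
    ∀ γ η : X →ₗ[ℝ] E, Function.Injective γ → Function.Injective η →
    (∀ k : ℕ, (k : ℕ∞) < l → ∀ x : X, P k (γ x) = P k (x : E)) →
    (∀ k : ℕ, (k : ℕ∞) < l → ∀ x : X, P k (η x) = P k (x : E)) →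
    ∀ ε : ℝ, 0 < ε →
    ∃ g : E ≃ₗ[ℝ] E, (∀ k : ℕ, (k : ℕ∞) < lam → ∀ y : E, P k (g y) = P k y) ∧
      ∀ k : ℕ, (k : ℕ∞) < l → ∀ x : X, P k (x : E) ≤ 1 → P k (g (γ x) - η x) ≤ ε

open Filter Topology

section Seminorm

variable {V : Type*} [AddCommGroup V] [Module ℝ V]

theorem Seminorm.le_mul_of_forall_le_one {p q : Seminorm ℝ V} {ε : ℝ}
    (h : ∀ v, p v ≤ 1 → q v ≤ ε) (v : V) : q v ≤ ε * p v := by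
  have hε : 0 ≤ ε := (apply_nonneg q 0).trans (h 0 (by simp))
  refine le_of_forall_pos_le_add fun η hη => ?_
  set t := p v + η / (ε + 1)
  have hδ : 0 < η / (ε + 1) := by positivity
  have ht : 0 < t := by positivity
  have hvt := h (t⁻¹ • v) (by
    rw [map_smul_eq_mul, norm_inv, Real.norm_of_nonneg ht.le, inv_mul_le_one₀ ht]
    linarith)
  rw [map_smul_eq_mul, norm_inv, Real.norm_of_nonneg ht.le, inv_mul_le_iff₀ ht] at hvt
  calc q v ≤ ε * t := by linarith
    _ = ε * p v + η * (ε / (ε + 1)) := by ring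
    _ ≤ ε * p v + η := by
      rw [add_le_add_iff_left]
      exact mul_le_of_le_one_right hη.le ((div_le_one (by linarith)).2 (by linarith))

theorem Seminorm.sub_le_of_le_geometric (p : Seminorm ℝ V) {u : ℕ → V} {C : ℝ} {m : ℕ}
    (hC : 0 ≤ C) (hu : ∀ n, m ≤ n → p (u (n + 1) - u n) ≤ C * (1 / 2) ^ n)
    {i n : ℕ} (hmi : m ≤ i) (hin : i ≤ n) : p (u n - u i) ≤ 2 * C * (1 / 2) ^ i := by
  suffices p (u n - u i) ≤ 2 * C * ((1 / 2) ^ i - (1 / 2) ^ n) by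
    nlinarith [pow_pos (by norm_num : (0 : ℝ) < 1 / 2) n]
  induction n, hin using Nat.le_induction with
  | base => simp
  | succ n hin ih =>
    calc p (u (n + 1) - u i) ≤ p (u (n + 1) - u n) + p (u n - u i) := by
          simpa using map_add_le_add p (u (n + 1) - u n) (u n - u i)
      _ ≤ 2 * C * ((1 / 2) ^ i - (1 / 2) ^ (n + 1)) := by
          have := hu n (hmi.trans hin)
          rw [pow_succ]
          linarith

end Seminorm

section Family

variable {V W : Type*} [AddCommGroup V] [Module ℝ V] [AddCommGroup W] [Module ℝ W]

def FamilySeparating (R : ℕ → Seminorm ℝ V) (lam : ℕ∞) : Prop :=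
  ∀ x : V, x ≠ 0 → ∃ k : ℕ, (k : ℕ∞) < lam ∧ R k x ≠ 0

def FamilyTendsto (R : ℕ → Seminorm ℝ V) (lam : ℕ∞) (u : ℕ → V) (x : V) : Prop :=
  ∀ k : ℕ, (k : ℕ∞) < lam → Tendsto (fun n => R k (u n - x)) atTop (𝓝 0)

def FamilyCauchySeq (R : ℕ → Seminorm ℝ V) (lam : ℕ∞) (u : ℕ → V) : Prop :=
  ∀ ε : ℝ, 0 < ε → ∀ k : ℕ, (k : ℕ∞) < lam →
    ∃ N, ∀ i j, N ≤ i → N ≤ j → R k (u i - u j) ≤ ε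

def FamilyComplete (R : ℕ → Seminorm ℝ V) (lam : ℕ∞) : Prop :=
  ∀ u : ℕ → V, FamilyCauchySeq R lam u →
    ∃ x : V, ∀ k : ℕ, (k : ℕ∞) < lam → ∀ ε : ℝ, 0 < ε → ∃ N, ∀ i, N ≤ i → R k (u i - x) ≤ ε

def FamilyDense (R : ℕ → Seminorm ℝ V) (lam : ℕ∞) (D : Set V) : Prop :=
  ∀ x : V, ∀ ε : ℝ, 0 < ε → ∀ N : ℕ, ∃ d ∈ D, ∀ k < N, (k : ℕ∞) < lam → R k (x - d) < ε

def IsometricOn (P : ℕ → Seminorm ℝ V) (Q : ℕ → Seminorm ℝ W) (lam : ℕ∞)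
    (X : Submodule ℝ V) (f : V →ₗ[ℝ] W) : Prop :=
  ∀ k : ℕ, (k : ℕ∞) < lam → ∀ x ∈ X, Q k (f x) = P k x

variable {R : ℕ → Seminorm ℝ V} {lam : ℕ∞}

theorem FamilySeparating.eq_zero (h : FamilySeparating R lam) {x : V}
    (hx : ∀ k : ℕ, (k : ℕ∞) < lam → R k x = 0) : x = 0 := by
  by_contra hne
  obtain ⟨k, hk, hkx⟩ := h x hne
  exact hkx (hx k hk)

namespace FamilyTendsto

variable {u v : ℕ → V} {x y : V}

theorem const (x : V) : FamilyTendsto R lam (fun _ => x) x := fun _ _ => by simp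

theorem add (hu : FamilyTendsto R lam u x) (hv : FamilyTendsto R lam v y) :
    FamilyTendsto R lam (fun n => u n + v n) (x + y) := fun k hk =>
  squeeze_zero (g := fun n => R k (u n - x) + R k (v n - y)) (fun _ => apply_nonneg _ _)
    (fun n => by rw [add_sub_add_comm]; exact map_add_le_add _ _ _)
    (by simpa using (hu k hk).add (hv k hk))

theorem sub (hu : FamilyTendsto R lam u x) (hv : FamilyTendsto R lam v y) :
    FamilyTendsto R lam (fun n => u n - v n) (x - y) := fun k hk =>
  squeeze_zero (g := fun n => R k (u n - x) + R k (v n - y)) (fun _ => apply_nonneg _ _)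
    (fun n => by rw [sub_sub_sub_comm]; exact map_sub_le_add _ _ _)
    (by simpa using (hu k hk).add (hv k hk))

theorem smul (hu : FamilyTendsto R lam u x) (r : ℝ) :
    FamilyTendsto R lam (fun n => r • u n) (r • x) := fun k hk => by
  simpa [← smul_sub, map_smul_eq_mul] using (hu k hk).const_mul ‖r‖

theorem tendsto_seminorm (h : FamilyTendsto R lam u x) {k : ℕ} (hk : (k : ℕ∞) < lam) :
    Tendsto (fun n => R k (u n)) atTop (𝓝 (R k x)) :=
  tendsto_iff_norm_sub_tendsto_zero.2 <| squeeze_zero (fun _ => norm_nonneg _)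
    (fun n => by simpa [Real.norm_eq_abs] using abs_sub_map_le_sub (R k) (u n) x) (h k hk)

theorem unique (hsep : FamilySeparating R lam) (hx : FamilyTendsto R lam u x)
    (hy : FamilyTendsto R lam u y) : x = y := by
  refine sub_eq_zero.1 (hsep.eq_zero fun k hk => ?_)
  have := (hx.sub hy).tendsto_seminorm hk
  simp only [sub_self, map_zero] at this
  exact tendsto_nhds_unique tendsto_const_nhds this |>.symm

theorem familyCauchySeq (h : FamilyTendsto R lam u x) : FamilyCauchySeq R lam u := by
  intro ε hε k hk
  obtain ⟨N, hN⟩ := eventually_atTop.1 ((h k hk).eventually (gt_mem_nhds (half_pos hε)))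
  refine ⟨N, fun i j hi hj => ?_⟩
  calc R k (u i - u j) ≤ R k (u i - x) + R k (u j - x) := by
        simpa using map_sub_le_add (R k) (u i - x) (u j - x)
    _ ≤ ε := by linarith [hN i hi, hN j hj]

end FamilyTendsto

theorem FamilyComplete.exists_familyTendsto (h : FamilyComplete R lam) {u : ℕ → V}
    (hu : FamilyCauchySeq R lam u) : ∃ x, FamilyTendsto R lam u x := by
  obtain ⟨x, hx⟩ := h u hu
  refine ⟨x, fun k hk => Metric.tendsto_atTop.2 fun ε hε => ?_⟩
  obtain ⟨N, hN⟩ := hx k hk (ε / 2) (half_pos hε)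
  refine ⟨N, fun n hn => ?_⟩
  rw [Real.dist_eq, sub_zero, abs_of_nonneg (apply_nonneg _ _)]
  linarith [hN n hn]

theorem FamilyDense.mono {D S : Set V} (hD : FamilyDense R lam D) (hDS : D ⊆ S) :
    FamilyDense R lam S := fun x ε hε N =>
  let ⟨d, hd, hxd⟩ := hD x ε hε N
  ⟨d, hDS hd, hxd⟩

theorem FamilyDense.exists_familyTendsto {D : Set V} (h : FamilyDense R lam D) (x : V) :
    ∃ u : ℕ → V, (∀ n, u n ∈ D) ∧ FamilyTendsto R lam u x := by
  choose u huD hu using fun n : ℕ => h x (1 / (n + 1)) Nat.one_div_pos_of_nat n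
  refine ⟨u, huD, fun k hk => squeeze_zero' (Eventually.of_forall fun _ => apply_nonneg _ _) ?_
    tendsto_one_div_add_atTop_nhds_zero_nat⟩
  filter_upwards [eventually_gt_atTop k] with n hn
  rw [← map_neg_eq_map, neg_sub]
  exact (hu n k hn hk).le

theorem FamilyDense.of_forall_familyTendsto {D S : Set V} (hD : FamilyDense R lam D)
    (hS : ∀ d ∈ D, ∃ u : ℕ → V, (∀ n, u n ∈ S) ∧ FamilyTendsto R lam u d) :
    FamilyDense R lam S := by
  intro x ε hε N
  obtain ⟨d, hd, hxd⟩ := hD x (ε / 2) (half_pos hε) N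
  obtain ⟨u, huS, hu⟩ := hS d hd
  have hclose : ∀ᶠ n in atTop, ∀ k ∈ Finset.range N, (k : ℕ∞) < lam → R k (u n - d) < ε / 2 := by
    refine (eventually_all_finset _).2 fun k _ => ?_
    by_cases hk : (k : ℕ∞) < lam
    · filter_upwards [(hu k hk).eventually (gt_mem_nhds (half_pos hε))] with n hn _ using hn
    · exact Eventually.of_forall fun _ h => absurd h hk
  obtain ⟨n, hn⟩ := hclose.exists
  refine ⟨u n, huS n, fun k hkN hk => ?_⟩
  calc R k (x - u n) ≤ R k (x - d) + R k (u n - d) := by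
        simpa using map_sub_le_add (R k) (x - d) (u n - d)
    _ < ε := by linarith [hxd k hkN hk, hn k (Finset.mem_range.2 hkN) hk]

theorem exists_familyDense_range (h : ∃ D : Set V, D.Countable ∧ FamilyDense R lam D) :
    ∃ d : ℕ → V, FamilyDense R lam (Set.range d) := by
  obtain ⟨D, hD, hdense⟩ := h
  obtain ⟨x, hx, -⟩ := hdense 0 1 one_pos 0
  obtain ⟨d, rfl⟩ := hD.exists_eq_range ⟨x, hx⟩
  exact ⟨d, hdense⟩

end Family

section Isometries

variable {M V W : Type*} [AddCommGroup M] [Module ℝ M] [AddCommGroup V] [Module ℝ V]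
  [AddCommGroup W] [Module ℝ W] {P : ℕ → Seminorm ℝ V} {Q : ℕ → Seminorm ℝ W} {lam : ℕ∞}

theorem IsometricOn.comp {S : ℕ → Seminorm ℝ M} {X : Submodule ℝ M} {Y : Submodule ℝ V}
    {f : M →ₗ[ℝ] V} {g : V →ₗ[ℝ] W} (hg : IsometricOn P Q lam Y g) (hf : IsometricOn S P lam X f)
    (hXY : X.map f ≤ Y) : IsometricOn S Q lam X (g ∘ₗ f) := fun k hk x hx =>
  (hg k hk (f x) (hXY (Submodule.mem_map_of_mem hx))).trans (hf k hk x hx)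

theorem exists_isometricOn_of_isometric {X : Submodule ℝ V} {φ : X →ₗ[ℝ] W}
    (hφ : ∀ k : ℕ, (k : ℕ∞) < lam → ∀ x : X, Q k (φ x) = P k x) :
    ∃ f : V →ₗ[ℝ] W, IsometricOn P Q lam X f := by
  obtain ⟨f, hf⟩ := LinearMap.exists_extend φ
  exact ⟨f, fun k hk x hx => by rw [← hφ k hk ⟨x, hx⟩, ← hf]; rfl⟩

theorem familyTendsto_map_iff (ι : M →ₗ[ℝ] V) (T : M →ₗ[ℝ] W)
    (hT : ∀ k : ℕ, (k : ℕ∞) < lam → ∀ m, Q k (T m) = P k (ι m)) {u : ℕ → M} {x : M} :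
    FamilyTendsto Q lam (fun n => T (u n)) (T x) ↔ FamilyTendsto P lam (fun n => ι (u n)) (ι x) :=
  forall₂_congr fun k hk => by simp only [← map_sub, hT k hk]

theorem familyCauchySeq_map_iff (ι : M →ₗ[ℝ] V) (T : M →ₗ[ℝ] W)
    (hT : ∀ k : ℕ, (k : ℕ∞) < lam → ∀ m, Q k (T m) = P k (ι m)) {u : ℕ → M} :
    FamilyCauchySeq Q lam (fun n => T (u n)) ↔ FamilyCauchySeq P lam (fun n => ι (u n)) :=
  forall₂_congr fun ε _ => forall₂_congr fun k hk => by simp only [← map_sub, hT k hk]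

theorem injective_of_isometric (hsep : FamilySeparating P lam) (ι : M →ₗ[ℝ] V)
    (hι : Function.Injective ι) (T : M →ₗ[ℝ] W)
    (hT : ∀ k : ℕ, (k : ℕ∞) < lam → ∀ m, Q k (T m) = P k (ι m)) : Function.Injective T :=
  (injective_iff_map_eq_zero T).2 fun m hm => hι <| by
    rw [map_zero]
    exact hsep.eq_zero fun k hk => by rw [← hT k hk, hm, map_zero]

theorem isLinearMap_of_familyTendsto (hsep : FamilySeparating Q lam) {a : ℕ → M → W}
    {T : M → W} (hT : ∀ x, FamilyTendsto Q lam (fun n => a n x) (T x))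
    (hadd : ∀ x y, FamilyTendsto Q lam (fun n => a n (x + y) - (a n x + a n y)) 0)
    (hsmul : ∀ (r : ℝ) x, FamilyTendsto Q lam (fun n => a n (r • x) - r • a n x) 0) :
    IsLinearMap ℝ T where
  map_add x y := (hT (x + y)).unique hsep <| by
    simpa using (hadd x y).add ((hT x).add (hT y))
  map_smul r x := (hT (r • x)).unique hsep <| by
    simpa using (hsmul r x).add ((hT x).smul r)

theorem exists_isometric_extension (hQsep : FamilySeparating Q lam)
    (hQcomp : FamilyComplete Q lam) {U : Submodule ℝ V} (hU : FamilyDense P lam (U : Set V))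
    (T₀ : U →ₗ[ℝ] W) (hT₀ : ∀ k : ℕ, (k : ℕ∞) < lam → ∀ u : U, Q k (T₀ u) = P k u) :
    ∃ T : V →ₗ[ℝ] W, (∀ k : ℕ, (k : ℕ∞) < lam → ∀ x, Q k (T x) = P k x) ∧ ∀ u : U, T u = T₀ u := by
  have hmap : ∀ {u : ℕ → U} {x : U}, FamilyTendsto P lam (fun n => (u n : V)) x →
      FamilyTendsto Q lam (fun n => T₀ (u n)) (T₀ x) :=
    (familyTendsto_map_iff U.subtype T₀ hT₀).2
  have hc : ∀ x : V, ∃ c : ℕ → U, FamilyTendsto P lam (fun n => (c n : V)) x := fun x => by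
    obtain ⟨u, huU, hu⟩ := hU.exists_familyTendsto x
    exact ⟨fun n => ⟨u n, huU n⟩, hu⟩
  choose c hc using hc
  have hlim : ∀ x, ∃ y, FamilyTendsto Q lam (fun n => T₀ (c x n)) y := fun x =>
    hQcomp.exists_familyTendsto
      ((familyCauchySeq_map_iff U.subtype T₀ hT₀).2 (hc x).familyCauchySeq)
  choose T hT using hlim
  have hlin : IsLinearMap ℝ T := isLinearMap_of_familyTendsto hQsep hT
    (fun x y => by
      simpa using hmap (u := fun n => c (x + y) n - (c x n + c y n)) (x := 0)
        (by simpa using (hc (x + y)).sub ((hc x).add (hc y))))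
    (fun r x => by
      simpa using hmap (u := fun n => c (r • x) n - r • c x n) (x := 0)
        (by simpa using (hc (r • x)).sub ((hc x).smul r)))
  refine ⟨IsLinearMap.mk' T hlin, fun k hk x => ?_, fun u => ?_⟩
  · exact tendsto_nhds_unique ((hT x).tendsto_seminorm hk)
      (by simpa only [hT₀ k hk] using (hc x).tendsto_seminorm hk)
  · exact (hT u).unique hQsep (hmap (hc u))

theorem surjective_of_familyDense_range (hQsep : FamilySeparating Q lam)
    (hPcomp : FamilyComplete P lam) (T : V →ₗ[ℝ] W)
    (hT : ∀ k : ℕ, (k : ℕ∞) < lam → ∀ x, Q k (T x) = P k x)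
    (hdense : FamilyDense Q lam (Set.range T)) : Function.Surjective T := by
  intro y
  obtain ⟨v, hvT, hv⟩ := hdense.exists_familyTendsto y
  choose u hu using hvT
  obtain rfl : v = fun n => T (u n) := funext fun n => (hu n).symm
  obtain ⟨x, hx⟩ := hPcomp.exists_familyTendsto
    ((familyCauchySeq_map_iff LinearMap.id T hT).1 hv.familyCauchySeq)
  exact ⟨x, ((familyTendsto_map_iff LinearMap.id T hT).2 hx).unique hQsep hv⟩

end Isometries

section Homogeneity

variable {V W : Type} [AddCommGroup V] [Module ℝ V] [AddCommGroup W] [Module ℝ W]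
  {P : ℕ → Seminorm ℝ V} {Q : ℕ → Seminorm ℝ W} {lam : ℕ∞}

theorem ApproxUltraHomog.exists_near (hauh : ApproxUltraHomog V P lam)
    (hsep : FamilySeparating P lam) {X : Submodule ℝ V} [FiniteDimensional ℝ X]
    {γ : V →ₗ[ℝ] V} (hγ : IsometricOn P P lam X γ) {ε : ℝ} (hε : 0 < ε) :
    ∃ g : V ≃ₗ[ℝ] V, (∀ k : ℕ, (k : ℕ∞) < lam → ∀ y, P k (g y) = P k y) ∧
      ∀ k : ℕ, (k : ℕ∞) < lam → ∀ x ∈ X, P k (g (γ x) - x) ≤ ε * P k x := by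
  have hγX : ∀ k : ℕ, (k : ℕ∞) < lam → ∀ x : X, P k (γ.domRestrict X x) = P k (X.subtype x) :=
    fun k hk x => hγ k hk x x.2
  obtain ⟨g, hg, hnear⟩ := hauh X inferInstance lam le_rfl (γ.domRestrict X) X.subtype
    (injective_of_isometric hsep X.subtype X.injective_subtype _ hγX) X.injective_subtype hγX
    (fun _ _ _ => rfl) ε hε
  refine ⟨g, hg, fun k hk x hx => ?_⟩
  -- `hnear` is the bound on the unit ball of `X`; homogeneity spreads it to all of `X`.
  simpa using Seminorm.le_mul_of_forall_le_one (p := (P k).comp X.subtype)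
    (q := (P k).comp (g.toLinearMap ∘ₗ γ.domRestrict X - X.subtype))
    (fun v hv => by simpa using hnear k hk v hv) ⟨x, hx⟩

theorem ApproxUltraHomog.exists_isometricOn_near (hauh : ApproxUltraHomog V P lam)
    (hsep : FamilySeparating P lam) {X : Submodule ℝ V} [FiniteDimensional ℝ X]
    {Y : Submodule ℝ W} {j : V →ₗ[ℝ] W} (hj : IsometricOn P Q lam X j) (hXY : X.map j ≤ Y)
    {ψ : W →ₗ[ℝ] V} (hψ : IsometricOn Q P lam Y ψ) {ε : ℝ} (hε : 0 < ε) :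
    ∃ θ : W →ₗ[ℝ] V, IsometricOn Q P lam Y θ ∧
      ∀ k : ℕ, (k : ℕ∞) < lam → ∀ x ∈ X, P k (θ (j x) - x) ≤ ε * P k x := by
  obtain ⟨g, hg, hnear⟩ := hauh.exists_near hsep (hψ.comp hj hXY) hε
  exact ⟨g.toLinearMap ∘ₗ ψ, fun k hk y hy => (hg k hk _).trans (hψ k hk y hy), hnear⟩

end Homogeneity

section Chain

variable {E F : Type} [AddCommGroup E] [Module ℝ E] [AddCommGroup F] [Module ℝ F]
  {P : ℕ → Seminorm ℝ E} {Q : ℕ → Seminorm ℝ F} {lam : ℕ∞}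

theorem exists_isometricOn_step (hPsep : FamilySeparating P lam)
    (hQsep : FamilySeparating Q lam) (hEauh : ApproxUltraHomog E P lam)
    (hFauh : ApproxUltraHomog F Q lam)
    (hEF : ∀ X : Submodule ℝ E, FiniteDimensional ℝ X → ∃ φ : E →ₗ[ℝ] F, IsometricOn P Q lam X φ)
    (hFE : ∀ Y : Submodule ℝ F, FiniteDimensional ℝ Y → ∃ ψ : F →ₗ[ℝ] E, IsometricOn Q P lam Y ψ)
    {X₀ : Submodule ℝ E} [FiniteDimensional ℝ X₀] {f₀ : E →ₗ[ℝ] F}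
    (hf₀ : IsometricOn P Q lam X₀ f₀) (A : Submodule ℝ E) [FiniteDimensional ℝ A]
    (B : Submodule ℝ F) [FiniteDimensional ℝ B] {ε : ℝ} (hε : 0 < ε) :
    ∃ (X₁ : Submodule ℝ E) (f₁ : E →ₗ[ℝ] F), FiniteDimensional ℝ X₁ ∧
      IsometricOn P Q lam X₁ f₁ ∧ X₀ ≤ X₁ ∧ A ≤ X₁ ∧
      (∀ k : ℕ, (k : ℕ∞) < lam → ∀ x ∈ X₀, Q k (f₁ x - f₀ x) ≤ ε * P k x) ∧
      ∀ b ∈ B, ∃ z ∈ X₁, ∀ k : ℕ, (k : ℕ∞) < lam → Q k (f₁ z - b) ≤ ε * Q k b := by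
  -- `θ₁` nearly inverts `f₀` on `X₀`, then `θ₂` nearly inverts `θ₁` on `Y`
  let Y := X₀.map f₀ ⊔ B
  obtain ⟨ψ, hψ⟩ := hFE Y inferInstance
  obtain ⟨θ₁, hθ₁, hnear₁⟩ :=
    hEauh.exists_isometricOn_near hPsep hf₀ le_sup_left hψ (half_pos hε)
  let X₁ := Y.map θ₁ ⊔ X₀ ⊔ A
  have hYX₁ : Y.map θ₁ ≤ X₁ := le_sup_left.trans le_sup_left
  have hX₀X₁ : X₀ ≤ X₁ := le_sup_right.trans le_sup_left
  obtain ⟨φ, hφ⟩ := hEF X₁ inferInstance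
  obtain ⟨θ₂, hθ₂, hnear₂⟩ := hFauh.exists_isometricOn_near hQsep hθ₁ hYX₁ hφ (half_pos hε)
  refine ⟨X₁, θ₂, inferInstance, hθ₂, hX₀X₁, le_sup_right, fun k hk x hx => ?_,
    fun b hb => ⟨θ₁ b, hYX₁ (Submodule.mem_map_of_mem (Submodule.mem_sup_right hb)),
      fun k hk => (hnear₂ k hk b (Submodule.mem_sup_right hb)).trans ?_⟩⟩
  · have hfx : f₀ x ∈ Y := Submodule.mem_sup_left (Submodule.mem_map_of_mem hx)
    have hθfx : θ₁ (f₀ x) ∈ X₁ := hYX₁ (Submodule.mem_map_of_mem hfx)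
    calc Q k (θ₂ x - f₀ x) ≤ Q k (θ₂ x - θ₂ (θ₁ (f₀ x))) + Q k (θ₂ (θ₁ (f₀ x)) - f₀ x) := by
          simpa using map_add_le_add (Q k) (θ₂ x - θ₂ (θ₁ (f₀ x))) (θ₂ (θ₁ (f₀ x)) - f₀ x)
      _ = P k (θ₁ (f₀ x) - x) + Q k (θ₂ (θ₁ (f₀ x)) - f₀ x) := by
          rw [← map_sub, hθ₂ k hk _ (sub_mem (hX₀X₁ hx) hθfx), map_sub_rev]
      _ ≤ ε / 2 * P k x + ε / 2 * Q k (f₀ x) :=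
          add_le_add (hnear₁ k hk x hx) (hnear₂ k hk _ hfx)
      _ = ε * P k x := by rw [hf₀ k hk x hx]; ring
  · exact mul_le_mul_of_nonneg_right (by linarith) (apply_nonneg _ _)

structure IsCoherentChain (P : ℕ → Seminorm ℝ E) (Q : ℕ → Seminorm ℝ F) (lam : ℕ∞)
    (X : ℕ → Submodule ℝ E) (f : ℕ → E →ₗ[ℝ] F) : Prop where
  mono : Monotone X
  isometricOn : ∀ n, IsometricOn P Q lam (X n) (f n)
  seminorm_succ_sub_le : ∀ n, ∀ k : ℕ, (k : ℕ∞) < lam → ∀ x ∈ X n,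
    Q k (f (n + 1) x - f n x) ≤ (1 / 2) ^ n * P k x

theorem exists_isCoherentChain (hPsep : FamilySeparating P lam)
    (hQsep : FamilySeparating Q lam) (hEauh : ApproxUltraHomog E P lam)
    (hFauh : ApproxUltraHomog F Q lam)
    (hEF : ∀ X : Submodule ℝ E, FiniteDimensional ℝ X → ∃ φ : E →ₗ[ℝ] F, IsometricOn P Q lam X φ)
    (hFE : ∀ Y : Submodule ℝ F, FiniteDimensional ℝ Y → ∃ ψ : F →ₗ[ℝ] E, IsometricOn Q P lam Y ψ)
    (A : ℕ → Submodule ℝ E) [∀ n, FiniteDimensional ℝ (A n)]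
    (B : ℕ → Submodule ℝ F) [∀ n, FiniteDimensional ℝ (B n)] :
    ∃ (X : ℕ → Submodule ℝ E) (f : ℕ → E →ₗ[ℝ] F), IsCoherentChain P Q lam X f ∧
      (∀ n, A n ≤ X (n + 1)) ∧
      ∀ n, ∀ b ∈ B n, ∃ z ∈ X (n + 1), ∀ k : ℕ, (k : ℕ∞) < lam →
        Q k (f (n + 1) z - b) ≤ (1 / 2) ^ n * Q k b := by
  let S := {s : Submodule ℝ E × (E →ₗ[ℝ] F) //
    FiniteDimensional ℝ s.1 ∧ IsometricOn P Q lam s.1 s.2}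
  have hstep : ∀ (s : S) (n : ℕ), ∃ t : S, s.1.1 ≤ t.1.1 ∧ A n ≤ t.1.1 ∧
      (∀ k : ℕ, (k : ℕ∞) < lam → ∀ x ∈ s.1.1, Q k (t.1.2 x - s.1.2 x) ≤ (1 / 2) ^ n * P k x) ∧
      ∀ b ∈ B n, ∃ z ∈ t.1.1, ∀ k : ℕ, (k : ℕ∞) < lam →
        Q k (t.1.2 z - b) ≤ (1 / 2) ^ n * Q k b := fun s n => by
    have := s.2.1
    obtain ⟨X₁, f₁, hX₁, hf₁, h₀₁, hA, hcoh, hB⟩ := exists_isometricOn_step hPsep hQsep hEauh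
      hFauh hEF hFE s.2.2 (A n) (B n) (by positivity : (0 : ℝ) < (1 / 2) ^ n)
    exact ⟨⟨(X₁, f₁), hX₁, hf₁⟩, h₀₁, hA, hcoh, hB⟩
  choose next hnext using hstep
  let s₀ : S := ⟨(⊥, 0), inferInstance, fun k _ x hx => by simp [(Submodule.mem_bot ℝ).1 hx]⟩
  let s : ℕ → S := fun n => Nat.rec s₀ (fun n t => next t n) n
  exact ⟨fun n => (s n).1.1, fun n => (s n).1.2,
    ⟨monotone_nat_of_le_succ fun n => (hnext (s n) n).1, fun n => (s n).2.2,
      fun n => (hnext (s n) n).2.2.1⟩, fun n => (hnext (s n) n).2.1, fun n => (hnext (s n) n).2.2.2⟩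

namespace IsCoherentChain

variable {X : ℕ → Submodule ℝ E} {f : ℕ → E →ₗ[ℝ] F}

theorem seminorm_sub_le (hc : IsCoherentChain P Q lam X f) {k : ℕ} (hk : (k : ℕ∞) < lam)
    {x : E} {m i n : ℕ} (hx : x ∈ X m) (hmi : m ≤ i) (hin : i ≤ n) :
    Q k (f n x - f i x) ≤ 2 * P k x * (1 / 2) ^ i :=
  (Q k).sub_le_of_le_geometric (u := fun n => f n x) (apply_nonneg _ _)
    (fun n hn => by rw [mul_comm]; exact hc.seminorm_succ_sub_le n k hk x (hc.mono hn hx)) hmi hin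

theorem familyCauchySeq (hc : IsCoherentChain P Q lam X f) {x : E} {m : ℕ} (hx : x ∈ X m) :
    FamilyCauchySeq Q lam (fun n => f n x) := by
  intro ε hε k hk
  have h0 : Tendsto (fun N => 4 * P k x * (1 / 2 : ℝ) ^ N) atTop (𝓝 0) := by
    simpa using (tendsto_pow_atTop_nhds_zero_of_lt_one (by norm_num : (0 : ℝ) ≤ 1 / 2)
      (by norm_num)).const_mul (4 * P k x)
  obtain ⟨N, hmN, hN⟩ := ((eventually_ge_atTop m).and (h0.eventually (gt_mem_nhds hε))).exists
  refine ⟨N, fun i j hi hj => ?_⟩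
  calc Q k (f i x - f j x) ≤ Q k (f i x - f N x) + Q k (f j x - f N x) := by
        simpa using map_sub_le_add (Q k) (f i x - f N x) (f j x - f N x)
    _ ≤ ε := by
        linarith [hc.seminorm_sub_le hk hx hmN hi, hc.seminorm_sub_le hk hx hmN hj]

theorem exists_limit (hc : IsCoherentChain P Q lam X f) (hQsep : FamilySeparating Q lam)
    (hQcomp : FamilyComplete Q lam) :
    ∃ T : ↥(⨆ n, X n) →ₗ[ℝ] F, (∀ k : ℕ, (k : ℕ∞) < lam → ∀ x, Q k (T x) = P k x) ∧
      ∀ n, ∀ k : ℕ, (k : ℕ∞) < lam → ∀ x : ↥(⨆ n, X n), (x : E) ∈ X n →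
        Q k (T x - f n x) ≤ 2 * P k x * (1 / 2) ^ n := by
  have hmem : ∀ x : ↥(⨆ n, X n), ∃ m, (x : E) ∈ X m := fun x =>
    (Submodule.mem_iSup_of_directed X hc.mono.directed_le).1 x.2
  have hlim : ∀ x : ↥(⨆ n, X n), ∃ y, FamilyTendsto Q lam (fun n => f n x) y := fun x =>
    let ⟨_, hx⟩ := hmem x
    hQcomp.exists_familyTendsto (hc.familyCauchySeq hx)
  choose T hT using hlim
  have hlin : IsLinearMap ℝ T := isLinearMap_of_familyTendsto hQsep hT
    (fun x y => by simpa using FamilyTendsto.const (R := Q) (lam := lam) (0 : F))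
    (fun r x => by simpa using FamilyTendsto.const (R := Q) (lam := lam) (0 : F))
  refine ⟨IsLinearMap.mk' T hlin, fun k hk x => ?_, fun n k hk x hx => ?_⟩
  · obtain ⟨m, hx⟩ := hmem x
    refine tendsto_nhds_unique ((hT x).tendsto_seminorm hk) (tendsto_const_nhds.congr' ?_)
    filter_upwards [eventually_ge_atTop m] with n hn
    exact (hc.isometricOn n k hk x (hc.mono hn hx)).symm
  · refine le_of_tendsto (((hT x).sub (FamilyTendsto.const (f n x))).tendsto_seminorm hk) ?_
    filter_upwards [eventually_ge_atTop n] with j hj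
    exact hc.seminorm_sub_le hk hx le_rfl hj

theorem exists_familyTendsto_of_absorbs (hc : IsCoherentChain P Q lam X f)
    {T : ↥(⨆ n, X n) →ₗ[ℝ] F}
    (hTf : ∀ n, ∀ k : ℕ, (k : ℕ∞) < lam → ∀ x : ↥(⨆ n, X n), (x : E) ∈ X n →
      Q k (T x - f n x) ≤ 2 * P k x * (1 / 2) ^ n)
    {b : F} {m : ℕ} (hb : ∀ n, m ≤ n → ∃ z ∈ X (n + 1), ∀ k : ℕ, (k : ℕ∞) < lam →
      Q k (f (n + 1) z - b) ≤ (1 / 2) ^ n * Q k b) :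
    ∃ z : ℕ → ↥(⨆ n, X n), FamilyTendsto Q lam (fun n => T (z n)) b := by
  choose z hzX hz using fun n => hb (n + m) (Nat.le_add_left m n)
  have hzU : ∀ n, z n ∈ ⨆ n, X n := fun n => Submodule.mem_iSup_of_mem _ (hzX n)
  refine ⟨fun n => ⟨z n, hzU n⟩, fun k hk => ?_⟩
  have h0 : Tendsto (fun n => 3 * Q k b * (1 / 2 : ℝ) ^ (n + m)) atTop (𝓝 0) := by
    simpa using ((tendsto_pow_atTop_nhds_zero_of_lt_one (by norm_num : (0 : ℝ) ≤ 1 / 2)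
      (by norm_num)).comp (tendsto_add_atTop_nat m)).const_mul (3 * Q k b)
  refine squeeze_zero (fun _ => apply_nonneg _ _) (fun n => ?_) h0
  set N := n + m
  have hfar := hz n k hk
  have hnear := hTf (N + 1) k hk ⟨z n, hzU n⟩ (hzX n)
  -- `f (N + 1)` is isometric on `z n` and nearly hits `b`, so `P k (z n) ≤ (1 + 2⁻ᴺ) * Q k b`
  have hzb : P k (z n) ≤ 2 * Q k b := by
    have hiso := hc.isometricOn (N + 1) k hk _ (hzX n)
    have : Q k (f (N + 1) (z n)) ≤ Q k (f (N + 1) (z n) - b) + Q k b := by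
      simpa using map_add_le_add (Q k) (f (N + 1) (z n) - b) b
    have : (1 / 2 : ℝ) ^ N ≤ 1 := pow_le_one₀ (by norm_num) (by norm_num)
    nlinarith [apply_nonneg (Q k) b]
  calc Q k (T ⟨z n, hzU n⟩ - b)
      ≤ Q k (T ⟨z n, hzU n⟩ - f (N + 1) (z n)) + Q k (f (N + 1) (z n) - b) := by
        simpa using map_add_le_add (Q k) (T ⟨z n, hzU n⟩ - f (N + 1) (z n)) (f (N + 1) (z n) - b)
    _ ≤ 2 * P k (z n) * (1 / 2) ^ (N + 1) + (1 / 2) ^ N * Q k b := add_le_add hnear hfar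
    _ ≤ 3 * Q k b * (1 / 2) ^ N := by
        rw [pow_succ]
        nlinarith [pow_pos (by norm_num : (0 : ℝ) < 1 / 2) N]

end IsCoherentChain

end Chain

/-- two separable, complete, approximately ultrahomogeneous spaces with
separating seminorm families of the same length `lam ≤ ω` and equivalent ages
are multi-isometric. -/
theorem stmt_7 {E F : Type} [AddCommGroup E] [Module ℝ E] [AddCommGroup F] [Module ℝ F]
    (lam : ℕ∞)
    (P : ℕ → Seminorm ℝ E) (Q : ℕ → Seminorm ℝ F)
    (hPsep : ∀ x : E, x ≠ 0 → ∃ k : ℕ, (k : ℕ∞) < lam ∧ P k x ≠ 0)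
    (hQsep : ∀ y : F, y ≠ 0 → ∃ k : ℕ, (k : ℕ∞) < lam ∧ Q k y ≠ 0)
    -- separability of E and F in the topology induced by the seminorm family
    (hEsep : ∃ D : Set E, D.Countable ∧ ∀ x : E, ∀ ε : ℝ, 0 < ε → ∀ N : ℕ,
      ∃ d ∈ D, ∀ k < N, (k : ℕ∞) < lam → P k (x - d) < ε)
    (hFsep : ∃ D : Set F, D.Countable ∧ ∀ y : F, ∀ ε : ℝ, 0 < ε → ∀ N : ℕ,
      ∃ d ∈ D, ∀ k < N, (k : ℕ∞) < lam → Q k (y - d) < ε)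
    -- completeness of E and F with respect to the seminorm family
    (hEcomp : ∀ u : ℕ → E,
      (∀ ε : ℝ, 0 < ε → ∀ k : ℕ, (k : ℕ∞) < lam →
        ∃ N, ∀ i j, N ≤ i → N ≤ j → P k (u i - u j) ≤ ε) →
      ∃ x : E, ∀ k : ℕ, (k : ℕ∞) < lam → ∀ ε : ℝ, 0 < ε →
        ∃ N, ∀ i, N ≤ i → P k (u i - x) ≤ ε)
    (hFcomp : ∀ u : ℕ → F,
      (∀ ε : ℝ, 0 < ε → ∀ k : ℕ, (k : ℕ∞) < lam →
        ∃ N, ∀ i j, N ≤ i → N ≤ j → Q k (u i - u j) ≤ ε) →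
      ∃ y : F, ∀ k : ℕ, (k : ℕ∞) < lam → ∀ ε : ℝ, 0 < ε →
        ∃ N, ∀ i, N ≤ i → Q k (u i - y) ≤ ε)
    (hEauh : ApproxUltraHomog E P lam)
    (hFauh : ApproxUltraHomog F Q lam)
    -- equivalence of ages
    (hEF : ∀ X : Submodule ℝ E, FiniteDimensional ℝ X →
      ∀ l : ℕ∞, l ≤ lam → (l < ⊤ ∨ l = lam) →
      ∃ φ : X →ₗ[ℝ] F, Function.Injective φ ∧
        ∀ k : ℕ, (k : ℕ∞) < l → ∀ x : X, Q k (φ x) = P k (x : E))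
    (hFE : ∀ Y : Submodule ℝ F, FiniteDimensional ℝ Y →
      ∀ l : ℕ∞, l ≤ lam → (l < ⊤ ∨ l = lam) →
      ∃ ψ : Y →ₗ[ℝ] E, Function.Injective ψ ∧
        ∀ k : ℕ, (k : ℕ∞) < l → ∀ y : Y, P k (ψ y) = Q k (y : F)) :
    ∃ T : E ≃ₗ[ℝ] F, ∀ k : ℕ, (k : ℕ∞) < lam → ∀ x : E, Q k (T x) = P k x := by
  classical
  obtain ⟨d, hd⟩ := exists_familyDense_range hEsep
  obtain ⟨e, he⟩ := exists_familyDense_range hFsep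
  obtain ⟨X, f, hc, hdX, heX⟩ := exists_isCoherentChain hPsep hQsep hEauh hFauh
    (fun X hX => let ⟨_, _, hφ⟩ := hEF X hX lam le_rfl (Or.inr rfl)
      exists_isometricOn_of_isometric hφ)
    (fun Y hY => let ⟨_, _, hψ⟩ := hFE Y hY lam le_rfl (Or.inr rfl)
      exists_isometricOn_of_isometric hψ)
    (fun n => ℝ ∙ d n) (fun n => Submodule.span ℝ ((Finset.range (n + 1)).image e : Set F))
  obtain ⟨T₀, hT₀, hT₀f⟩ := hc.exists_limit hQsep hFcomp
  obtain ⟨T, hT, hTT₀⟩ := exists_isometric_extension hQsep hFcomp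
    (hd.mono (Set.range_subset_iff.2 fun n => Submodule.mem_iSup_of_mem (n + 1)
      (hdX n (Submodule.mem_span_singleton_self _)))) T₀ hT₀
  have hdense : FamilyDense Q lam (Set.range T) := by
    refine he.of_forall_familyTendsto ?_
    rintro _ ⟨m, rfl⟩
    obtain ⟨z, hz⟩ := hc.exists_familyTendsto_of_absorbs hT₀f (b := e m) (m := m)
      fun n hmn => heX n _ (Submodule.subset_span (Finset.mem_coe.2
        (Finset.mem_image_of_mem e (Finset.mem_range.2 (Nat.lt_succ_of_le hmn)))))
    exact ⟨fun n => T (z n), fun n => ⟨_, rfl⟩, by simpa [hTT₀] using hz⟩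
  exact ⟨.ofBijective T ⟨injective_of_isometric hPsep LinearMap.id Function.injective_id T hT,
    surjective_of_familyDense_range hQsep hEcomp T hT hdense⟩, hT⟩
end

section
/- Let V be a real vector space with a seminorm p, let n ∈ ℕ, and let (J_s)_{s<ω} and (L_s)_{s<ω} be sequences of linear maps V → V satisfying, for all s and all x, y ∈ V: p(J_s(x)) = p(x), p(L_s(x)) = p(x), p(J_{s+1}(L_s(y)) − y) ≤ 2^{−(n+2s)}·p(y), and p(L_s(J_s(x)) − x) ≤ 2^{−(n+2s+1)}·p(x). Then p(J_{s+1}(x) − J_s(x)) ≤ 3·2^{−(n+2s+1)}·p(x) for all s and x, and consequently p(J_{s+t}(x) − J_s(x)) ≤ 3·2^{−(n+2s)}·p(x) for all s, t < ω and all x ∈ V. In particular, for every x ∈ V the sequence (J_s(x))_{s<ω} is Cauchy with respect to p. -/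
/-- the back-and-forth estimates: seminorm-preserving maps `J_s`, `L_s`
with the stated approximate-inverse conditions satisfy the successive difference
bounds, and hence `(J_s x)` is Cauchy with respect to `p`. -/
theorem stmt_8 {V : Type*} [AddCommGroup V] [Module ℝ V]
    (p : Seminorm ℝ V) (n : ℕ)
    (J L : ℕ → V →ₗ[ℝ] V)
    (hJ : ∀ (s : ℕ) (x : V), p (J s x) = p x)
    (hL : ∀ (s : ℕ) (x : V), p (L s x) = p x)
    (hJL : ∀ (s : ℕ) (y : V), p (J (s + 1) (L s y) - y) ≤ ((2 : ℝ) ^ (n + 2 * s))⁻¹ * p y)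
    (hLJ : ∀ (s : ℕ) (x : V), p (L s (J s x) - x) ≤ ((2 : ℝ) ^ (n + 2 * s + 1))⁻¹ * p x) :
    (∀ (s : ℕ) (x : V),
        p (J (s + 1) x - J s x) ≤ 3 * ((2 : ℝ) ^ (n + 2 * s + 1))⁻¹ * p x) ∧
      (∀ (s t : ℕ) (x : V),
        p (J (s + t) x - J s x) ≤ 3 * ((2 : ℝ) ^ (n + 2 * s))⁻¹ * p x) ∧
      (∀ x : V, ∀ ε : ℝ, 0 < ε → ∃ N : ℕ, ∀ s t : ℕ, N ≤ s → N ≤ t →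
        p (J s x - J t x) ≤ ε) := by
  have step : ∀ (s : ℕ) (x : V),
      p (J (s + 1) x - J s x) ≤ 3 * ((2 : ℝ) ^ (n + 2 * s + 1))⁻¹ * p x := by
    intro s x
    have h1 : p (J (s + 1) x - J (s + 1) (L s (J s x)))
        ≤ ((2 : ℝ) ^ (n + 2 * s + 1))⁻¹ * p x := by
      have : J (s + 1) x - J (s + 1) (L s (J s x)) = J (s + 1) (x - L s (J s x)) := by
        rw [map_sub]
      rw [this, hJ]
      have := hLJ s x
      rwa [map_sub_rev] at this
    have h2 : p (J (s + 1) (L s (J s x)) - J s x)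
        ≤ ((2 : ℝ) ^ (n + 2 * s))⁻¹ * p x := by
      have := hJL s (J s x)
      rwa [hJ] at this
    have key : p (J (s + 1) x - J s x)
        ≤ p (J (s + 1) x - J (s + 1) (L s (J s x))) + p (J (s + 1) (L s (J s x)) - J s x) := by
      calc p (J (s + 1) x - J s x)
          = p ((J (s + 1) x - J (s + 1) (L s (J s x))) + (J (s + 1) (L s (J s x)) - J s x)) := by
            rw [sub_add_sub_cancel]
        _ ≤ _ := map_add_le_add _ _ _
    have hpow : ((2 : ℝ) ^ (n + 2 * s))⁻¹ = 2 * ((2 : ℝ) ^ (n + 2 * s + 1))⁻¹ := by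
      rw [pow_succ]
      field_simp
    calc p (J (s + 1) x - J s x) ≤ _ := key
      _ ≤ ((2 : ℝ) ^ (n + 2 * s + 1))⁻¹ * p x + ((2 : ℝ) ^ (n + 2 * s))⁻¹ * p x :=
          add_le_add h1 h2
      _ = 3 * ((2 : ℝ) ^ (n + 2 * s + 1))⁻¹ * p x := by rw [hpow]; ring
  have tel : ∀ (s t : ℕ) (x : V),
      p (J (s + t) x - J s x) ≤ 3 * ((2 : ℝ) ^ (n + 2 * s))⁻¹ * p x := by
    intro s t x
    induction t generalizing s with
    | zero =>
      simp only [Nat.add_zero, sub_self, map_zero]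
      positivity
    | succ t ih =>
      have h1 := ih (s + 1)
      have h2 := step s x
      have key : p (J (s + (t + 1)) x - J s x)
          ≤ p (J (s + 1 + t) x - J (s + 1) x) + p (J (s + 1) x - J s x) := by
        calc p (J (s + (t + 1)) x - J s x)
            = p ((J (s + 1 + t) x - J (s + 1) x) + (J (s + 1) x - J s x)) := by
              have : s + (t + 1) = s + 1 + t := by ring
              rw [this, sub_add_sub_cancel]
          _ ≤ _ := map_add_le_add _ _ _
      have hpow1 : ((2 : ℝ) ^ (n + 2 * (s + 1)))⁻¹
          = ((2 : ℝ) ^ (n + 2 * s))⁻¹ / 4 := by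
        have : n + 2 * (s + 1) = (n + 2 * s) + 2 := by ring
        rw [this, pow_add]
        norm_num
        ring
      have hpow2 : ((2 : ℝ) ^ (n + 2 * s + 1))⁻¹
          = ((2 : ℝ) ^ (n + 2 * s))⁻¹ / 2 := by
        rw [pow_succ]
        field_simp
      have hp : (0 : ℝ) ≤ p x := apply_nonneg p x
      have hq : (0 : ℝ) ≤ ((2 : ℝ) ^ (n + 2 * s))⁻¹ := by positivity
      calc p (J (s + (t + 1)) x - J s x) ≤ _ := key
        _ ≤ 3 * ((2 : ℝ) ^ (n + 2 * (s + 1)))⁻¹ * p x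
            + 3 * ((2 : ℝ) ^ (n + 2 * s + 1))⁻¹ * p x := add_le_add h1 h2
        _ ≤ 3 * ((2 : ℝ) ^ (n + 2 * s))⁻¹ * p x := by
            rw [hpow1, hpow2]; nlinarith
  refine ⟨step, tel, ?_⟩
  intro x ε hε
  have hpx : (0 : ℝ) ≤ p x := apply_nonneg p x
  obtain ⟨N, hN⟩ : ∃ N : ℕ, ((1 : ℝ) / 2) ^ N < ε / (6 * (p x + 1)) := by
    apply exists_pow_lt_of_lt_one
    · positivity
    · norm_num
  refine ⟨N, fun s t hs ht => ?_⟩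
  have bound : ∀ m : ℕ, N ≤ m → p (J m x - J N x) ≤ 3 * ((2 : ℝ) ^ (n + 2 * N))⁻¹ * p x := by
    intro m hm
    have := tel N (m - N) x
    rwa [Nat.add_sub_cancel' hm] at this
  have key : p (J s x - J t x) ≤ 6 * ((2 : ℝ) ^ (n + 2 * N))⁻¹ * p x := by
    calc p (J s x - J t x)
        = p ((J s x - J N x) + -(J t x - J N x)) := by rw [neg_sub, sub_add_sub_cancel]
      _ ≤ p (J s x - J N x) + p (-(J t x - J N x)) := map_add_le_add _ _ _
      _ = p (J s x - J N x) + p (J t x - J N x) := by rw [map_neg_eq_map]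
      _ ≤ 3 * ((2 : ℝ) ^ (n + 2 * N))⁻¹ * p x + 3 * ((2 : ℝ) ^ (n + 2 * N))⁻¹ * p x :=
          add_le_add (bound s hs) (bound t ht)
      _ = 6 * ((2 : ℝ) ^ (n + 2 * N))⁻¹ * p x := by ring
  have hmono : ((2 : ℝ) ^ (n + 2 * N))⁻¹ ≤ ((1 : ℝ) / 2) ^ N := by
    rw [one_div, inv_pow]
    apply inv_anti₀
    · positivity
    · exact pow_le_pow_right₀ one_le_two (by omega)
  have h6 : 6 * ((2 : ℝ) ^ (n + 2 * N))⁻¹ * p x ≤ ε := by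
    have h1 : 6 * ((2 : ℝ) ^ (n + 2 * N))⁻¹ * p x ≤ 6 * ((1 : ℝ) / 2) ^ N * (p x + 1) := by
      have : (0 : ℝ) ≤ ((1:ℝ)/2) ^ N := by positivity
      nlinarith
    have h2 : 6 * ((1 : ℝ) / 2) ^ N * (p x + 1) ≤ ε := by
      rw [lt_div_iff₀ (by positivity)] at hN
      nlinarith
    linarith
  linarith
end

section
/- Let E be a real vector space with a separating seminorm family (P_m)_{m<λ} which is approximately ultrahomogeneous, and let 1 ≤ n ≤ λ be finite. Then the following are equivalent: (i) for all finite-dimensional subspaces X, Y of E (each equipped with the first n seminorms of E) and every ε > 0, there exists a finite-dimensional subspace Z of E such that every n-continuous colouring of Emb(X,Z) admits γ ∈ Emb(Y,Z) with oscillation of the colouring on γ ∘ Emb(X,Y) at most ε; (ii) for all such X, Y, every ε > 0 and every n-continuous colouring c of Emb(X,E), there exists γ ∈ Emb(Y,E) such that the oscillation of c on γ ∘ Emb(X,Y) is at most ε. -/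
/-!
(i) ⇒ (ii): a colouring of `Emb(X, E)` restricts to one of `Emb(X, Z)`, and a good
`γ ∈ Emb(Y, Z)` is a good embedding into `E`.

(ii) ⇒ (i) is a compactness argument. If every finite-dimensional `Z` carried a bad colouring
`c_Z`, their limit along an ultrafilter on the finite-dimensional subspaces containing all
tails `{Z | Z₀ ≤ Z}` would be an `n`-continuous colouring of `Emb(X, E)`, and (ii) gives it a
`γ` of oscillation `ε / 2`. As `Y` is finite-dimensional, `Emb(X, Y)` is totally bounded for
`max_{k<n} d_k`, so every bad pair for `γ` in `c_Z` can be moved to a fixed finite `ε / 8`-net;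
one pair of net points is then bad for ultrafilter-many `Z`, hence also in the limit.
-/

/-- `EmbSub P X W n`: injective linear maps between the subspaces `X` and `W` of the
ambient space preserving the first `n` (restricted) seminorms. -/
def EmbSub {E : Type} [AddCommGroup E] [Module ℝ E] (P : ℕ → Seminorm ℝ E)
    (X W : Submodule ℝ E) (n : ℕ) : Set (X →ₗ[ℝ] W) :=
  {φ | Function.Injective φ ∧ ∀ k < n, ∀ x : X, P k ((φ x : E)) = P k (x : E)}

/-- `EmbFull P X n`: injective linear maps from the subspace `X` into the ambient space
preserving the first `n` seminorms. -/
def EmbFull {E : Type} [AddCommGroup E] [Module ℝ E] (P : ℕ → Seminorm ℝ E)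
    (X : Submodule ℝ E) (n : ℕ) : Set (X →ₗ[ℝ] E) :=
  {φ | Function.Injective φ ∧ ∀ k < n, ∀ x : X, P k (φ x) = P k (x : E)}

open Filter Topology Set

theorem Seminorm.exists_finite_net {V : Type*} [AddCommGroup V] [Module ℝ V]
    [FiniteDimensional ℝ V] (q : Seminorm ℝ V) {B : Set V} {R : ℝ} (hB : ∀ s ∈ B, q s ≤ R)
    {δ : ℝ} (hδ : 0 < δ) : ∃ F ⊆ B, F.Finite ∧ ∀ s ∈ B, ∃ t ∈ F, q (s - t) < δ := by
  -- `q`-bounded sets are totally bounded: pass to the Hausdorff quotient, a proper space.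
  let := q.toAddGroupSeminorm.toSeminormedAddCommGroup
  let : NormedSpace ℝ V := ⟨fun c v => (map_smul_eq_mul q c v).le⟩
  have : FiniteDimensional ℝ (SeparationQuotient V) :=
    Module.Finite.of_surjective (SeparationQuotient.mkCLM ℝ V).toLinearMap
      SeparationQuotient.surjective_mk
  have hB' : TotallyBounded B :=
    (totallyBounded_preimage SeparationQuotient.isUniformInducing_mk
      (isCompact_closedBall (0 : SeparationQuotient V) R).totallyBounded).subset
      fun s hs => by
        simp only [mem_preimage, Metric.mem_closedBall, dist_zero_right,
          SeparationQuotient.norm_mk]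
        exact hB s hs
  obtain ⟨F, hFB, hF, hcover⟩ :=
    totallyBounded_iff_subset.mp hB' _ (Metric.dist_mem_uniformity hδ)
  refine ⟨F, hFB, hF, fun s hs => ?_⟩
  obtain ⟨t, ht, hst⟩ := mem_iUnion₂.mp (hcover hs)
  exact ⟨t, ht, (dist_eq_norm s t).symm.trans_lt hst⟩

def Seminorm.bddAboveSubmodule {ι V : Type*} [AddCommGroup V] [Module ℝ V]
    (p : ι → Seminorm ℝ V) : Submodule ℝ V where
  carrier := {v | BddAbove (range fun i => p i v)}
  zero_mem' := ⟨0, by simp [mem_upperBounds]⟩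
  add_mem' := by
    rintro a b ⟨Ma, hMa⟩ ⟨Mb, hMb⟩
    refine ⟨Ma + Mb, forall_mem_range.mpr fun i => ?_⟩
    exact (map_add_le_add _ a b).trans
      (add_le_add (hMa (mem_range_self i)) (hMb (mem_range_self i)))
  smul_mem' := by
    rintro c a ⟨M, hM⟩
    refine ⟨‖c‖ * M, forall_mem_range.mpr fun i => ?_⟩
    rw [map_smul_eq_mul]
    exact mul_le_mul_of_nonneg_left (hM (mem_range_self i)) (norm_nonneg c)

theorem Seminorm.exists_finite_net_of_family {ι V : Type*} [AddCommGroup V] [Module ℝ V]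
    [FiniteDimensional ℝ V] (p : ι → Seminorm ℝ V) {B : Set V} {R : ℝ}
    (hB : ∀ s ∈ B, ∀ i, p i s ≤ R) {δ : ℝ} (hδ : 0 < δ) :
    ∃ F ⊆ B, F.Finite ∧ ∀ s ∈ B, ∃ t ∈ F, ∀ i, p i (s - t) ≤ δ := by
  set W := bddAboveSubmodule p
  have hBW : B ⊆ W := fun s hs => ⟨R, forall_mem_range.mpr (hB s hs)⟩
  have hbdd : BddAbove (range fun i => (p i).comp W.subtype) :=
    Seminorm.bddAbove_range_iff.mpr fun v => v.2
  set q := ⨆ i, (p i).comp W.subtype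
  have hle : ∀ v : W, ∀ i, p i v ≤ q v := fun v i => by
    rw [Seminorm.iSup_apply hbdd]
    exact le_ciSup (f := fun i => p i v) v.2 i
  obtain ⟨F, hFB, hF, hnet⟩ := q.exists_finite_net (B := W.subtype ⁻¹' B) (R := max R 0)
    (fun s hs => by
      rw [Seminorm.iSup_apply hbdd]
      exact Real.iSup_le (fun i => (hB s hs i).trans (le_max_left _ _)) (le_max_right _ _)) hδ
  refine ⟨W.subtype '' F, ?_, hF.image _, fun s hs => ?_⟩
  · rintro _ ⟨t, ht, rfl⟩
    exact hFB ht
  obtain ⟨t, ht, hst⟩ := hnet ⟨s, hBW hs⟩ hs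
  exact ⟨t, mem_image_of_mem _ ht, fun i => (hle _ i).trans hst.le⟩

section Ramsey

variable {E : Type} [AddCommGroup E] [Module ℝ E] (P : ℕ → Seminorm ℝ E) (n : ℕ)

def DistLE {X : Submodule ℝ E} (φ ψ : X → E) (r : ℝ) : Prop :=
  ∀ k < n, ∀ x : X, P k (x : E) ≤ 1 → P k (φ x - ψ x) ≤ r

def IsColouring (X W : Submodule ℝ E) (c : (X →ₗ[ℝ] W) → ℝ) : Prop :=
  (∀ φ ∈ EmbSub P X W n, c φ ∈ Icc (0 : ℝ) 1) ∧
    ∀ φ ∈ EmbSub P X W n, ∀ ψ ∈ EmbSub P X W n, ∀ r : ℝ,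
      DistLE P n (fun x => (φ x : E)) (fun x => (ψ x : E)) r → |c φ - c ψ| ≤ r

def IsFullColouring (X : Submodule ℝ E) (c : (X →ₗ[ℝ] E) → ℝ) : Prop :=
  (∀ φ ∈ EmbFull P X n, c φ ∈ Icc (0 : ℝ) 1) ∧
    ∀ φ ∈ EmbFull P X n, ∀ ψ ∈ EmbFull P X n, ∀ r : ℝ, DistLE P n φ ψ r → |c φ - c ψ| ≤ r

def OscLE {X Y : Submodule ℝ E} {M : Type} [AddCommGroup M] [Module ℝ M]
    (c : (X →ₗ[ℝ] M) → ℝ) (γ : Y →ₗ[ℝ] M) (ε : ℝ) : Prop :=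
  ∀ η ∈ EmbSub P X Y n, ∀ η' ∈ EmbSub P X Y n, |c (γ ∘ₗ η) - c (γ ∘ₗ η')| ≤ ε

def FiniteApproxRamsey : Prop :=
  ∀ X Y : Submodule ℝ E, FiniteDimensional ℝ X → FiniteDimensional ℝ Y →
    ∀ ε : ℝ, 0 < ε → ∃ Z : Submodule ℝ E, FiniteDimensional ℝ Z ∧
      ∀ c : (X →ₗ[ℝ] Z) → ℝ, (∀ φ ∈ EmbSub P X Z n, c φ ∈ Icc (0 : ℝ) 1) →
        (∀ φ ∈ EmbSub P X Z n, ∀ ψ ∈ EmbSub P X Z n, ∀ r : ℝ,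
          DistLE P n (fun x => (φ x : E)) (fun x => (ψ x : E)) r → |c φ - c ψ| ≤ r) →
        ∃ γ ∈ EmbSub P Y Z n, OscLE P n c γ ε

def InfiniteApproxRamsey : Prop :=
  ∀ X Y : Submodule ℝ E, FiniteDimensional ℝ X → FiniteDimensional ℝ Y →
    ∀ ε : ℝ, 0 < ε → ∀ c : (X →ₗ[ℝ] E) → ℝ, (∀ φ ∈ EmbFull P X n, c φ ∈ Icc (0 : ℝ) 1) →
      (∀ φ ∈ EmbFull P X n, ∀ ψ ∈ EmbFull P X n, ∀ r : ℝ, DistLE P n φ ψ r → |c φ - c ψ| ≤ r) →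
      ∃ γ ∈ EmbFull P Y n, OscLE P n c γ ε

variable {P n}

theorem subtype_comp_mem_embFull_iff {X W : Submodule ℝ E} {φ : X →ₗ[ℝ] W} :
    W.subtype ∘ₗ φ ∈ EmbFull P X n ↔ φ ∈ EmbSub P X W n :=
  (W.injective_subtype.of_comp_iff φ).and Iff.rfl

theorem codRestrict_mem_embSub {X W : Submodule ℝ E} {φ : X →ₗ[ℝ] E}
    (hφ : φ ∈ EmbFull P X n) (h : ∀ x, φ x ∈ W) : φ.codRestrict W h ∈ EmbSub P X W n :=
  subtype_comp_mem_embFull_iff.mp hφ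

theorem comp_mem_embFull {X Y : Submodule ℝ E} {γ : Y →ₗ[ℝ] E} {η : X →ₗ[ℝ] Y}
    (hγ : γ ∈ EmbFull P Y n) (hη : η ∈ EmbSub P X Y n) : γ ∘ₗ η ∈ EmbFull P X n :=
  ⟨hγ.1.comp hη.1, fun k hk x => (hγ.2 k hk (η x)).trans (hη.2 k hk x)⟩

theorem distLE_comp {X Y : Submodule ℝ E} {γ : Y →ₗ[ℝ] E} (hγ : γ ∈ EmbFull P Y n)
    {η η' : X →ₗ[ℝ] Y} {r : ℝ} (h : DistLE P n (fun x => (η x : E)) (fun x => (η' x : E)) r) :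
    DistLE P n (γ ∘ₗ η) (γ ∘ₗ η') r := fun k hk x hx => by
  simpa only [LinearMap.comp_apply, ← map_sub, hγ.2 k hk, Submodule.coe_sub] using h k hk x hx

theorem exists_finite_net_embSub (X Y : Submodule ℝ E) [FiniteDimensional ℝ X]
    [FiniteDimensional ℝ Y] {δ : ℝ} (hδ : 0 < δ) :
    ∃ F ⊆ EmbSub P X Y n, F.Finite ∧ ∀ η ∈ EmbSub P X Y n, ∃ t ∈ F,
      DistLE P n (fun x => (η x : E)) (fun x => (t x : E)) δ := by
  let p : {i : ℕ × X // i.1 < n ∧ P i.1 i.2 ≤ 1} → Seminorm ℝ (X →ₗ[ℝ] Y) :=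
    fun i => (P i.1.1).comp (Y.subtype ∘ₗ LinearMap.applyₗ i.1.2)
  obtain ⟨F, hFS, hF, hnet⟩ := Seminorm.exists_finite_net_of_family p (R := 1)
    (fun η (hη : η ∈ EmbSub P X Y n) i => (hη.2 _ i.2.1 _).trans_le i.2.2) hδ
  refine ⟨F, hFS, hF, fun η hη => ?_⟩
  obtain ⟨t, ht, hηt⟩ := hnet η hη
  refine ⟨t, ht, fun k hk x hx => ?_⟩
  simpa [p] using hηt ⟨(k, x), hk, hx⟩

abbrev FinDimSubspace (E : Type) [AddCommGroup E] [Module ℝ E] :=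
  {Z : Submodule ℝ E // FiniteDimensional ℝ Z}

instance : IsDirected (FinDimSubspace E) (· ≤ ·) :=
  ⟨fun Z₁ Z₂ => ⟨⟨Z₁.1 ⊔ Z₂.1, have := Z₁.2; have := Z₂.2; inferInstance⟩,
    le_sup_left (a := Z₁.1), le_sup_right (a := Z₁.1)⟩⟩

instance : Nonempty (FinDimSubspace E) := ⟨⟨⊥, inferInstance⟩⟩

variable (P n) in
open Classical in
noncomputable def extendColouring {X : Submodule ℝ E} (W : Submodule ℝ E)
    (c : (X →ₗ[ℝ] W) → ℝ) (φ : X →ₗ[ℝ] E) : ℝ :=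
  if h : φ ∈ EmbFull P X n ∧ ∀ x, φ x ∈ W then c (φ.codRestrict W h.2) else 0

theorem extendColouring_of_mem {X W : Submodule ℝ E} (c : (X →ₗ[ℝ] W) → ℝ)
    {φ : X →ₗ[ℝ] E} (hφ : φ ∈ EmbFull P X n) (hW : ∀ x, φ x ∈ W) :
    extendColouring P n W c φ = c (φ.codRestrict W hW) :=
  dif_pos ⟨hφ, hW⟩

theorem extendColouring_mem_Icc {X W : Submodule ℝ E} {c : (X →ₗ[ℝ] W) → ℝ}
    (hc : IsColouring P n X W c) (φ : X →ₗ[ℝ] E) :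
    extendColouring P n W c φ ∈ Icc (0 : ℝ) 1 := by
  unfold extendColouring
  split_ifs with h
  · exact hc.1 _ (codRestrict_mem_embSub h.1 h.2)
  · exact ⟨le_rfl, zero_le_one⟩

theorem abs_extendColouring_sub_le {X W : Submodule ℝ E} {c : (X →ₗ[ℝ] W) → ℝ}
    (hc : IsColouring P n X W c) {φ ψ : X →ₗ[ℝ] E} (hφ : φ ∈ EmbFull P X n)
    (hψ : ψ ∈ EmbFull P X n) (hφW : ∀ x, φ x ∈ W) (hψW : ∀ x, ψ x ∈ W) {r : ℝ}
    (h : DistLE P n φ ψ r) :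
    |extendColouring P n W c φ - extendColouring P n W c ψ| ≤ r := by
  rw [extendColouring_of_mem c hφ hφW, extendColouring_of_mem c hψ hψW]
  exact hc.2 _ (codRestrict_mem_embSub hφ hφW) _ (codRestrict_mem_embSub hψ hψW) r h

theorem exists_isFullColouring_tendsto {X : Submodule ℝ E} [FiniteDimensional ℝ X]
    (U : Ultrafilter (FinDimSubspace E)) (hU : ↑U ≤ (atTop : Filter (FinDimSubspace E)))
    (c : ∀ W : FinDimSubspace E, (X →ₗ[ℝ] W.1) → ℝ) (hc : ∀ W, IsColouring P n X W.1 (c W)) :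
    ∃ c' : (X →ₗ[ℝ] E) → ℝ, IsFullColouring P n X c' ∧
      ∀ φ, Tendsto (fun W => extendColouring P n W.1 (c W) φ) U (𝓝 (c' φ)) := by
  have hlim : ∀ φ : X →ₗ[ℝ] E, ∃ a,
      Tendsto (fun W => extendColouring P n W.1 (c W) φ) U (𝓝 a) := fun φ => by
    have hmem : ∀ W : FinDimSubspace E, extendColouring P n W.1 (c W) φ ∈ Icc (0 : ℝ) 1 :=
      fun W => extendColouring_mem_Icc (hc W) φ
    obtain ⟨a, -, ha⟩ := isCompact_Icc.ultrafilter_le_nhds (U.map _)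
      (le_principal_iff.mpr (mem_map.mpr (univ_mem' hmem)))
    exact ⟨a, ha⟩
  choose c' hc' using hlim
  refine ⟨c', ⟨fun φ _ => isClosed_Icc.mem_of_tendsto (hc' φ)
    (Eventually.of_forall fun W => extendColouring_mem_Icc (hc W) φ),
    fun φ hφ ψ hψ r h => le_of_tendsto ((hc' φ).sub (hc' ψ)).abs ?_⟩, hc'⟩
  have : FiniteDimensional ℝ ↥(LinearMap.range φ ⊔ LinearMap.range ψ) :=
    Submodule.finiteDimensional_sup _ _
  filter_upwards [hU (eventually_ge_atTop ⟨_, this⟩)] with W hW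
  exact abs_extendColouring_sub_le (hc W) hφ hψ
    (fun x => hW (Submodule.mem_sup_left (LinearMap.mem_range_self φ x)))
    (fun x => hW (Submodule.mem_sup_right (LinearMap.mem_range_self ψ x))) h

theorem exists_net_pair_lt_abs_sub {X Y : Submodule ℝ E} {h : (X →ₗ[ℝ] Y) → ℝ}
    (hh : ∀ η ∈ EmbSub P X Y n, ∀ η' ∈ EmbSub P X Y n, ∀ r : ℝ,
      DistLE P n (fun x => (η x : E)) (fun x => (η' x : E)) r → |h η - h η'| ≤ r)
    {F : Set (X →ₗ[ℝ] Y)} (hFS : F ⊆ EmbSub P X Y n) {δ : ℝ}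
    (hnet : ∀ η ∈ EmbSub P X Y n, ∃ t ∈ F,
      DistLE P n (fun x => (η x : E)) (fun x => (t x : E)) δ)
    {η η' : X →ₗ[ℝ] Y} (hη : η ∈ EmbSub P X Y n) (hη' : η' ∈ EmbSub P X Y n) {ε : ℝ}
    (hbad : ε < |h η - h η'|) : ∃ p ∈ F ×ˢ F, ε - 2 * δ < |h p.1 - h p.2| := by
  obtain ⟨t, ht, hηt⟩ := hnet η hη
  obtain ⟨t', ht', hηt'⟩ := hnet η' hη'
  have h₁ := hh η hη t (hFS ht) δ hηt
  have h₂ := hh η' hη' t' (hFS ht') δ hηt'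
  refine ⟨(t, t'), mk_mem_prod ht ht', ?_⟩
  calc ε - 2 * δ < |h η - h η'| - |h η - h t| - |h η' - h t'| := by linarith
    _ ≤ |h t - h t'| := by
      linarith [abs_sub_le (h η) (h t) (h η'), abs_sub_le (h t) (h t') (h η'),
        abs_sub_comm (h t') (h η')]

theorem FiniteApproxRamsey.infinite (H : FiniteApproxRamsey P n) : InfiniteApproxRamsey P n := by
  intro X Y hX hY ε hε c hc₀₁ hcLip
  obtain ⟨Z, -, hZ⟩ := H X Y hX hY ε hε
  obtain ⟨γ, hγ, hosc⟩ := hZ (fun φ => c (Z.subtype ∘ₗ φ))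
    (fun φ hφ => hc₀₁ _ (subtype_comp_mem_embFull_iff.mpr hφ))
    (fun φ hφ ψ hψ => hcLip _ (subtype_comp_mem_embFull_iff.mpr hφ) _
      (subtype_comp_mem_embFull_iff.mpr hψ))
  exact ⟨Z.subtype ∘ₗ γ, subtype_comp_mem_embFull_iff.mpr hγ, hosc⟩

theorem InfiniteApproxRamsey.finite (H : InfiniteApproxRamsey P n) : FiniteApproxRamsey P n := by
  intro X Y hX hY ε hε
  by_contra! hbad
  choose c hc₀₁ hcLip hosc using fun W : FinDimSubspace E => hbad W.1 W.2
  let U := Ultrafilter.of (atTop : Filter (FinDimSubspace E))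
  have hU : ↑U ≤ (atTop : Filter (FinDimSubspace E)) := Ultrafilter.of_le _
  obtain ⟨c', hc', hlim⟩ := exists_isFullColouring_tendsto U hU c fun W => ⟨hc₀₁ W, hcLip W⟩
  obtain ⟨γ, hγ, hγosc⟩ := H X Y hX hY (ε / 2) (by positivity) c' hc'.1 hc'.2
  obtain ⟨F, hFS, hF, hnet⟩ := exists_finite_net_embSub (P := P) (n := n) X Y
    (δ := ε / 8) (by positivity)
  have hlarge : ∀ᶠ W in U, ∃ p ∈ F ×ˢ F, ε - 2 * (ε / 8) <
      |extendColouring P n W.1 (c W) (γ ∘ₗ p.1) -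
        extendColouring P n W.1 (c W) (γ ∘ₗ p.2)| := by
    filter_upwards [hU (eventually_ge_atTop ⟨LinearMap.range γ, inferInstance⟩)] with W hW
    have hγW : ∀ y, γ y ∈ W.1 := fun y => hW (LinearMap.mem_range_self γ y)
    have hext : ∀ η ∈ EmbSub P X Y n, extendColouring P n W.1 (c W) (γ ∘ₗ η) =
        c W (γ.codRestrict W.1 hγW ∘ₗ η) := fun η hη =>
      extendColouring_of_mem _ (comp_mem_embFull hγ hη) _
    obtain ⟨η, hη, η', hη', hbig⟩ : ∃ η ∈ EmbSub P X Y n, ∃ η' ∈ EmbSub P X Y n,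
        ε < |c W (γ.codRestrict W.1 hγW ∘ₗ η) - c W (γ.codRestrict W.1 hγW ∘ₗ η')| := by
      simpa [OscLE] using hosc W _ (codRestrict_mem_embSub hγ hγW)
    refine exists_net_pair_lt_abs_sub (h := fun η => extendColouring P n W.1 (c W) (γ ∘ₗ η))
      (fun η hη η' hη' r hr => ?_) hFS hnet hη hη' (by rwa [hext η hη, hext η' hη'])
    exact abs_extendColouring_sub_le ⟨hc₀₁ W, hcLip W⟩ (comp_mem_embFull hγ hη)
      (comp_mem_embFull hγ hη') (fun x => hγW _) (fun x => hγW _) (distLE_comp hγ hr)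
  obtain ⟨p, hp, hpU⟩ := (U.eventually_exists_mem_iff (hF.prod hF)).mp hlarge
  have := ge_of_tendsto ((hlim _).sub (hlim _)).abs (hpU.mono fun W hW => hW.le)
  linarith [hγosc p.1 (hFS (mem_prod.mp hp).1) p.2 (hFS (mem_prod.mp hp).2)]

end Ramsey

theorem stmt_11_general {E : Type} [AddCommGroup E] [Module ℝ E]
    (P : ℕ → Seminorm ℝ E)
    (n : ℕ) :
    (∀ X Y : Submodule ℝ E, FiniteDimensional ℝ X → FiniteDimensional ℝ Y →
        ∀ ε : ℝ, 0 < ε →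
        ∃ Z : Submodule ℝ E, FiniteDimensional ℝ Z ∧
          ∀ c : (X →ₗ[ℝ] Z) → ℝ,
            (∀ φ ∈ EmbSub P X Z n, c φ ∈ Set.Icc (0 : ℝ) 1) →
            (∀ φ ∈ EmbSub P X Z n, ∀ ψ ∈ EmbSub P X Z n, ∀ ε' : ℝ,
              (∀ k < n, ∀ x : X, P k (x : E) ≤ 1 → P k ((φ x : E) - (ψ x : E)) ≤ ε') →
              |c φ - c ψ| ≤ ε') →
            ∃ γ ∈ EmbSub P Y Z n, ∀ η ∈ EmbSub P X Y n, ∀ η' ∈ EmbSub P X Y n,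
              |c (γ.comp η) - c (γ.comp η')| ≤ ε) ↔
      (∀ X Y : Submodule ℝ E, FiniteDimensional ℝ X → FiniteDimensional ℝ Y →
        ∀ ε : ℝ, 0 < ε →
        ∀ c : (X →ₗ[ℝ] E) → ℝ,
          (∀ φ ∈ EmbFull P X n, c φ ∈ Set.Icc (0 : ℝ) 1) →
          (∀ φ ∈ EmbFull P X n, ∀ ψ ∈ EmbFull P X n, ∀ ε' : ℝ,
            (∀ k < n, ∀ x : X, P k (x : E) ≤ 1 → P k (φ x - ψ x) ≤ ε') →
            |c φ - c ψ| ≤ ε') →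
          ∃ γ ∈ EmbFull P Y n, ∀ η ∈ EmbSub P X Y n, ∀ η' ∈ EmbSub P X Y n,
            |c (γ.comp η) - c (γ.comp η')| ≤ ε) :=
  ⟨FiniteApproxRamsey.infinite, InfiniteApproxRamsey.finite⟩

/-- for an approximately ultrahomogeneous space `E`, the continuous
approximate Ramsey property of `Age_n(E)` is equivalent to its "infinite" version with
target `E` itself. -/
theorem stmt_11 {E : Type} [AddCommGroup E] [Module ℝ E]
    (lam : ℕ∞) (P : ℕ → Seminorm ℝ E)
    (hsep : ∀ x : E, x ≠ 0 → ∃ k : ℕ, (k : ℕ∞) < lam ∧ P k x ≠ 0)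
    (hauh : ApproxUltraHomog E P lam)
    (n : ℕ) (hn : 1 ≤ n) (hnlam : (n : ℕ∞) ≤ lam) :
    (∀ X Y : Submodule ℝ E, FiniteDimensional ℝ X → FiniteDimensional ℝ Y →
        ∀ ε : ℝ, 0 < ε →
        ∃ Z : Submodule ℝ E, FiniteDimensional ℝ Z ∧
          ∀ c : (X →ₗ[ℝ] Z) → ℝ,
            (∀ φ ∈ EmbSub P X Z n, c φ ∈ Set.Icc (0 : ℝ) 1) →
            (∀ φ ∈ EmbSub P X Z n, ∀ ψ ∈ EmbSub P X Z n, ∀ ε' : ℝ,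
              (∀ k < n, ∀ x : X, P k (x : E) ≤ 1 → P k ((φ x : E) - (ψ x : E)) ≤ ε') →
              |c φ - c ψ| ≤ ε') →
            ∃ γ ∈ EmbSub P Y Z n, ∀ η ∈ EmbSub P X Y n, ∀ η' ∈ EmbSub P X Y n,
              |c (γ.comp η) - c (γ.comp η')| ≤ ε) ↔
      (∀ X Y : Submodule ℝ E, FiniteDimensional ℝ X → FiniteDimensional ℝ Y →
        ∀ ε : ℝ, 0 < ε →
        ∀ c : (X →ₗ[ℝ] E) → ℝ,
          (∀ φ ∈ EmbFull P X n, c φ ∈ Set.Icc (0 : ℝ) 1) →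
          (∀ φ ∈ EmbFull P X n, ∀ ψ ∈ EmbFull P X n, ∀ ε' : ℝ,
            (∀ k < n, ∀ x : X, P k (x : E) ≤ 1 → P k (φ x - ψ x) ≤ ε') →
            |c φ - c ψ| ≤ ε') →
          ∃ γ ∈ EmbFull P Y n, ∀ η ∈ EmbSub P X Y n, ∀ η' ∈ EmbSub P X Y n,
            |c (γ.comp η) - c (γ.comp η')| ≤ ε) :=
  stmt_11_general P n
end

section
/- Let X and Y be finite-dimensional real vector spaces with seminorms p and q respectively, let X̃ and Ỹ be finite-dimensional real normed spaces with surjective linear maps π_X : X → X̃ and π_Y : Y → Ỹ satisfying ‖π_X(x)‖ = p(x) for all x ∈ X and ‖π_Y(y)‖ = q(y) for all y ∈ Y. Let ε > 0, r ∈ ℕ, and let Z be a finite-dimensional real normed space such that every colouring c : Emb(X̃,Z) → {0,…,r−1} admits ρ ∈ Emb(Ỹ,Z) and i < r with ρ ∘ Emb(X̃,Ỹ) ⊆ (c⁻¹{i})_ε. Let W = Z × Z equipped with the seminorm N(z₁,z₂) = ‖z₁‖. Then every colouring c : Emb((X,p),(W,N)) → {0,…,r−1} admits σ ∈ Emb((Y,q),(W,N))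 and i < r with σ ∘ Emb((X,p),(Y,q)) ⊆ (c⁻¹{i})_ε. -/
/-!
Precomposing with `πX` turns an isometric embedding `ψ : X' → Z` into the seminorm-preserving
map `x ↦ (ψ (πX x), 0)` into `(Z × Z, N)`. Conversely a seminorm-preserving `η : X → Y` maps
the kernel of `p` into the kernel of `q`, so it descends to an isometric embedding
`η' : X' → Y'` with `η' ∘ πX = πY ∘ η`. Colour `ψ` by the colour of its lift and apply the
Ramsey property of `Z`; the lift of the resulting `ρ` works, since `N` only sees first
coordinates.
-/

section Descent

variable {X Y X' Y' : Type*} [AddCommGroup X] [Module ℝ X] [AddCommGroup Y] [Module ℝ Y]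
  [SeminormedAddCommGroup X'] [NormedSpace ℝ X'] [NormedAddCommGroup Y'] [NormedSpace ℝ Y']
  {p : Seminorm ℝ X} {q : Seminorm ℝ Y} {πX : X →ₗ[ℝ] X'} {πY : Y →ₗ[ℝ] Y'}

theorem apply_eq_of_seminorm_comp_eq (hπX : ∀ x, ‖πX x‖ = p x) (hπY : ∀ y, ‖πY y‖ = q y)
    {η : X →ₗ[ℝ] Y} (hη : ∀ x, q (η x) = p x) {x₁ x₂ : X} (h : πX x₁ = πX x₂) :
    πY (η x₁) = πY (η x₂) := by
  rw [← sub_eq_zero, ← norm_eq_zero]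
  calc ‖πY (η x₁) - πY (η x₂)‖ = ‖πX x₁ - πX x₂‖ := by
        rw [← map_sub, ← map_sub, hπY, hη, ← hπX, map_sub]
    _ = 0 := by rw [h, sub_self, norm_zero]

theorem exists_isometry_comp_eq_of_seminorm_comp_eq (hπXsurj : Function.Surjective πX)
    (hπX : ∀ x, ‖πX x‖ = p x) (hπY : ∀ y, ‖πY y‖ = q y)
    {η : X →ₗ[ℝ] Y} (hη : ∀ x, q (η x) = p x) :
    ∃ η' : X' →ₗ[ℝ] Y', (∀ a, ‖η' a‖ = ‖a‖) ∧ η' ∘ₗ πX = πY ∘ₗ η := by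
  obtain ⟨s, hs⟩ := πX.exists_rightInverse_of_surjective (LinearMap.range_eq_top.2 hπXsurj)
  have hπXs (a : X') : πX (s a) = a := LinearMap.congr_fun hs a
  have hcomp : πY ∘ₗ η ∘ₗ s ∘ₗ πX = πY ∘ₗ η := LinearMap.ext fun x =>
    apply_eq_of_seminorm_comp_eq hπX hπY hη (hπXs (πX x))
  refine ⟨πY ∘ₗ η ∘ₗ s, fun a => ?_, hcomp⟩
  obtain ⟨x, rfl⟩ := hπXsurj a
  calc ‖(πY ∘ₗ η ∘ₗ s) (πX x)‖ = ‖πY (η x)‖ := congrArg norm (LinearMap.congr_fun hcomp x)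
    _ = ‖πX x‖ := by rw [hπY, hη, hπX]

end Descent

section InlComp

variable {X X' Z : Type*} [AddCommGroup X] [Module ℝ X]
  [SeminormedAddCommGroup X'] [NormedSpace ℝ X'] [SeminormedAddCommGroup Z] [NormedSpace ℝ Z]
  {N : Seminorm ℝ (Z × Z)}

def inlComp (π : X →ₗ[ℝ] X') (ψ : X' →ₗ[ℝ] Z) : X →ₗ[ℝ] Z × Z :=
  LinearMap.inl ℝ Z Z ∘ₗ ψ ∘ₗ π

theorem seminorm_inlComp_apply (hN : ∀ w : Z × Z, N w = ‖w.1‖) (π : X →ₗ[ℝ] X')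
    (ψ : X' →ₗ[ℝ] Z) (x : X) : N (inlComp π ψ x) = ‖ψ (π x)‖ :=
  hN _

theorem seminorm_inlComp_apply_of_isometry (hN : ∀ w : Z × Z, N w = ‖w.1‖)
    {p : Seminorm ℝ X} {π : X →ₗ[ℝ] X'} (hπ : ∀ x, ‖π x‖ = p x)
    {ψ : X' →ₗ[ℝ] Z} (hψ : ∀ a, ‖ψ a‖ = ‖a‖) (x : X) : N (inlComp π ψ x) = p x := by
  rw [seminorm_inlComp_apply hN, hψ, hπ]

theorem inlComp_comp {Y : Type*} [AddCommGroup Y] [Module ℝ Y] (π : X →ₗ[ℝ] X')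
    (ψ : X' →ₗ[ℝ] Z) (η : Y →ₗ[ℝ] X) : inlComp π ψ ∘ₗ η = inlComp (π ∘ₗ η) ψ :=
  rfl

theorem inlComp_sub (π : X →ₗ[ℝ] X') (ψ ψ' : X' →ₗ[ℝ] Z) :
    inlComp π ψ - inlComp π ψ' = inlComp π (ψ - ψ') := by
  ext x <;> simp [inlComp]

end InlComp

theorem stmt_13_general {X Y X' Y' Z : Type*}
    [AddCommGroup X] [Module ℝ X]
    [AddCommGroup Y] [Module ℝ Y]
    [NormedAddCommGroup X'] [NormedSpace ℝ X']
    [NormedAddCommGroup Y'] [NormedSpace ℝ Y']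
    [NormedAddCommGroup Z] [NormedSpace ℝ Z]
    (p : Seminorm ℝ X) (q : Seminorm ℝ Y)
    (πX : X →ₗ[ℝ] X') (hπXsurj : Function.Surjective πX) (hπX : ∀ x, ‖πX x‖ = p x)
    (πY : Y →ₗ[ℝ] Y') (hπY : ∀ y, ‖πY y‖ = q y)
    (ε : ℝ) (r : ℕ)
    (hZ : ∀ c : (X' →ₗ[ℝ] Z) → ℕ,
      (∀ φ : X' →ₗ[ℝ] Z, (∀ a, ‖φ a‖ = ‖a‖) → c φ < r) →
      ∃ ρ : Y' →ₗ[ℝ] Z, (∀ b, ‖ρ b‖ = ‖b‖) ∧ ∃ i < r,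
        ∀ η : X' →ₗ[ℝ] Y', (∀ a, ‖η a‖ = ‖a‖) →
          ∃ μ : X' →ₗ[ℝ] Z, (∀ a, ‖μ a‖ = ‖a‖) ∧ c μ = i ∧
            ∀ a, ‖a‖ ≤ 1 → ‖(ρ.comp η) a - μ a‖ ≤ ε)
    (N : Seminorm ℝ (Z × Z)) (hN : ∀ w : Z × Z, N w = ‖w.1‖) :
    ∀ c : (X →ₗ[ℝ] Z × Z) → ℕ,
      (∀ φ : X →ₗ[ℝ] Z × Z, (∀ a, N (φ a) = p a) → c φ < r) →
      ∃ σ : Y →ₗ[ℝ] Z × Z, (∀ b, N (σ b) = q b) ∧ ∃ i < r,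
        ∀ η : X →ₗ[ℝ] Y, (∀ a, q (η a) = p a) →
          ∃ μ : X →ₗ[ℝ] Z × Z, (∀ a, N (μ a) = p a) ∧ c μ = i ∧
            ∀ a, p a ≤ 1 → N ((σ.comp η) a - μ a) ≤ ε := by
  intro c hc
  obtain ⟨ρ, hρ, i, hi, hρi⟩ := hZ (fun ψ => c (inlComp πX ψ))
    fun ψ hψ => hc _ (seminorm_inlComp_apply_of_isometry hN hπX hψ)
  refine ⟨inlComp πY ρ, seminorm_inlComp_apply_of_isometry hN hπY hρ, i, hi, fun η hη => ?_⟩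
  obtain ⟨η', hη', hη'π⟩ := exists_isometry_comp_eq_of_seminorm_comp_eq hπXsurj hπX hπY hη
  obtain ⟨μ, hμ, hcμ, hclose⟩ := hρi η' hη'
  refine ⟨inlComp πX μ, seminorm_inlComp_apply_of_isometry hN hπX hμ, hcμ, fun a ha => ?_⟩
  have hση : inlComp πY ρ ∘ₗ η = inlComp πX (ρ ∘ₗ η') := by
    rw [inlComp_comp, ← hη'π]; rfl
  calc N ((inlComp πY ρ ∘ₗ η) a - inlComp πX μ a)
      = N (inlComp πX (ρ ∘ₗ η' - μ) a) := by rw [hση, ← inlComp_sub]; rfl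
    _ = ‖(ρ ∘ₗ η') (πX a) - μ (πX a)‖ := seminorm_inlComp_apply hN _ _ _
    _ ≤ ε := hclose _ (by rwa [hπX])

/-- transferring the approximate Ramsey property from a normed-space
amalgam `Z` to the seminormed setting via `W = Z × Z` with `N(z₁,z₂) = ‖z₁‖`. -/
theorem stmt_13 {X Y X' Y' Z : Type*}
    [AddCommGroup X] [Module ℝ X] [FiniteDimensional ℝ X]
    [AddCommGroup Y] [Module ℝ Y] [FiniteDimensional ℝ Y]
    [NormedAddCommGroup X'] [NormedSpace ℝ X'] [FiniteDimensional ℝ X']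
    [NormedAddCommGroup Y'] [NormedSpace ℝ Y'] [FiniteDimensional ℝ Y']
    [NormedAddCommGroup Z] [NormedSpace ℝ Z] [FiniteDimensional ℝ Z]
    (p : Seminorm ℝ X) (q : Seminorm ℝ Y)
    (πX : X →ₗ[ℝ] X') (hπXsurj : Function.Surjective πX) (hπX : ∀ x, ‖πX x‖ = p x)
    (πY : Y →ₗ[ℝ] Y') (hπYsurj : Function.Surjective πY) (hπY : ∀ y, ‖πY y‖ = q y)
    (ε : ℝ) (hε : 0 < ε) (r : ℕ)
    (hZ : ∀ c : (X' →ₗ[ℝ] Z) → ℕ,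
      (∀ φ : X' →ₗ[ℝ] Z, (∀ a, ‖φ a‖ = ‖a‖) → c φ < r) →
      ∃ ρ : Y' →ₗ[ℝ] Z, (∀ b, ‖ρ b‖ = ‖b‖) ∧ ∃ i < r,
        ∀ η : X' →ₗ[ℝ] Y', (∀ a, ‖η a‖ = ‖a‖) →
          ∃ μ : X' →ₗ[ℝ] Z, (∀ a, ‖μ a‖ = ‖a‖) ∧ c μ = i ∧
            ∀ a, ‖a‖ ≤ 1 → ‖(ρ.comp η) a - μ a‖ ≤ ε)
    (N : Seminorm ℝ (Z × Z)) (hN : ∀ w : Z × Z, N w = ‖w.1‖) :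
    ∀ c : (X →ₗ[ℝ] Z × Z) → ℕ,
      (∀ φ : X →ₗ[ℝ] Z × Z, (∀ a, N (φ a) = p a) → c φ < r) →
      ∃ σ : Y →ₗ[ℝ] Z × Z, (∀ b, N (σ b) = q b) ∧ ∃ i < r,
        ∀ η : X →ₗ[ℝ] Y, (∀ a, q (η a) = p a) →
          ∃ μ : X →ₗ[ℝ] Z × Z, (∀ a, N (μ a) = p a) ∧ c μ = i ∧
            ∀ a, p a ≤ 1 → N ((σ.comp η) a - μ a) ≤ ε :=
  stmt_13_general p q πX hπXsurj hπX πY hπY ε r hZ N hN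
end

section
/- Let X₁, Y₁, Z₁, X₂, Y₂, Z₂ be finite-dimensional real seminormed spaces, let ε > 0 and r ∈ ℕ. Suppose: (a) every colouring of Emb(X₁,Z₁) with r colours admits ρ₁ ∈ Emb(Y₁,Z₁) such that ρ₁ ∘ Emb(X₁,Y₁) is ε/2-monochromatic; (b) D is a finite ε/2-dense subset of Emb(X₁,Z₁) with respect to the operator-seminorm distance; and (c) every colouring of Emb(X₂,Z₂) with r^{|D|} colours admits ρ₂ ∈ Emb(Y₂,Z₂) such that ρ₂ ∘ Emb(X₂,Y₂) is ε/2-monochromatic. Then for every colouring c : Emb(X₁,Z₁) × Emb(X₂,Z₂) → {0,…,r−1} there exist ρ₁ ∈ Emb(Y₁,Z₁) and ρ₂ ∈ Emb(Y₂,Z₂) such that (ρ₁ ∘ Emb(X₁,Y₁)) × (ρ₂ ∘ Emb(X₂,Y₂)) is ε-monochromatic for c, i.e. there is a colour i < r such that for every (γ₁,γ₂) ∈ Emb(X₁,Y₁) × Emb(X₂,Y₂) there is (μ₁,μ₂) with c(μ₁,μ₂) = i and d(μ_j, ρ_j∘γ_j) ≤ ε for j = 1,2. -/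
/-- `SEmb p q` is the set of seminorm-preserving linear maps between two seminormed
spaces. -/
def SEmb {A B : Type*} [AddCommGroup A] [Module ℝ A] [AddCommGroup B] [Module ℝ B]
    (p : Seminorm ℝ A) (q : Seminorm ℝ B) : Set (A →ₗ[ℝ] B) :=
  {φ | ∀ a, q (φ a) = p a}

/-- `sDistLE p q φ ψ ε` expresses that the operator-seminorm distance
`d(φ,ψ) = sup{ q (φ a − ψ a) : p a ≤ 1 }` is at most `ε`. -/
def sDistLE {A B : Type*} [AddCommGroup A] [Module ℝ A] [AddCommGroup B] [Module ℝ B]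
    (p : Seminorm ℝ A) (q : Seminorm ℝ B) (φ ψ : A →ₗ[ℝ] B) (ε : ℝ) : Prop :=
  ∀ a, p a ≤ 1 → q (φ a - ψ a) ≤ ε

/-- product Ramsey step: from Ramsey data in each coordinate one obtains
an `ε`-monochromatic product set for any `r`-colouring of the product of embedding
spaces. -/
theorem stmt_14 {X₁ Y₁ Z₁ X₂ Y₂ Z₂ : Type*}
    [AddCommGroup X₁] [Module ℝ X₁] [FiniteDimensional ℝ X₁]
    [AddCommGroup Y₁] [Module ℝ Y₁] [FiniteDimensional ℝ Y₁]
    [AddCommGroup Z₁] [Module ℝ Z₁] [FiniteDimensional ℝ Z₁]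
    [AddCommGroup X₂] [Module ℝ X₂] [FiniteDimensional ℝ X₂]
    [AddCommGroup Y₂] [Module ℝ Y₂] [FiniteDimensional ℝ Y₂]
    [AddCommGroup Z₂] [Module ℝ Z₂] [FiniteDimensional ℝ Z₂]
    (p₁ : Seminorm ℝ X₁) (q₁ : Seminorm ℝ Y₁) (s₁ : Seminorm ℝ Z₁)
    (p₂ : Seminorm ℝ X₂) (q₂ : Seminorm ℝ Y₂) (s₂ : Seminorm ℝ Z₂)
    (ε : ℝ) (hε : 0 < ε) (r : ℕ)
    (ha : ∀ c : (X₁ →ₗ[ℝ] Z₁) → ℕ, (∀ φ ∈ SEmb p₁ s₁, c φ < r) →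
      ∃ ρ₁ ∈ SEmb q₁ s₁, ∃ i < r, ∀ γ ∈ SEmb p₁ q₁,
        ∃ μ ∈ SEmb p₁ s₁, c μ = i ∧ sDistLE p₁ s₁ μ (ρ₁.comp γ) (ε / 2))
    (D : Finset (X₁ →ₗ[ℝ] Z₁))
    (hDsub : ∀ ψ ∈ D, ψ ∈ SEmb p₁ s₁)
    (hDdense : ∀ φ ∈ SEmb p₁ s₁, ∃ ψ ∈ D, sDistLE p₁ s₁ φ ψ (ε / 2))
    (hc : ∀ c : (X₂ →ₗ[ℝ] Z₂) → ℕ, (∀ φ ∈ SEmb p₂ s₂, c φ < r ^ D.card) →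
      ∃ ρ₂ ∈ SEmb q₂ s₂, ∃ i < r ^ D.card, ∀ γ ∈ SEmb p₂ q₂,
        ∃ μ ∈ SEmb p₂ s₂, c μ = i ∧ sDistLE p₂ s₂ μ (ρ₂.comp γ) (ε / 2)) :
    ∀ c : (X₁ →ₗ[ℝ] Z₁) × (X₂ →ₗ[ℝ] Z₂) → ℕ,
      (∀ φ₁ ∈ SEmb p₁ s₁, ∀ φ₂ ∈ SEmb p₂ s₂, c (φ₁, φ₂) < r) →
      ∃ ρ₁ ∈ SEmb q₁ s₁, ∃ ρ₂ ∈ SEmb q₂ s₂, ∃ i < r,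
        ∀ γ₁ ∈ SEmb p₁ q₁, ∀ γ₂ ∈ SEmb p₂ q₂,
          ∃ μ₁ ∈ SEmb p₁ s₁, ∃ μ₂ ∈ SEmb p₂ s₂,
            c (μ₁, μ₂) = i ∧ sDistLE p₁ s₁ μ₁ (ρ₁.comp γ₁) ε ∧
              sDistLE p₂ s₂ μ₂ (ρ₂.comp γ₂) ε := by
  classical
  intro c hcr
  set n := D.card with hn
  have e : {x // x ∈ D} ≃ Fin n := D.equivFin
  -- colouring of Emb(X₂,Z₂) by the trace on D
  set c₂ : (X₂ →ₗ[ℝ] Z₂) → ℕ := fun φ₂ =>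
    if h : φ₂ ∈ SEmb p₂ s₂ then
      (finFunctionFinEquiv (fun k : Fin n =>
        (⟨c ((e.symm k : {x // x ∈ D}).1, φ₂),
          hcr _ (hDsub _ (e.symm k).2) _ h⟩ : Fin r))).val
    else 0 with hc₂def
  have hc₂lt : ∀ φ ∈ SEmb p₂ s₂, c₂ φ < r ^ D.card := by
    intro φ hφ
    simp only [hc₂def, dif_pos hφ]
    exact (finFunctionFinEquiv _).isLt
  obtain ⟨ρ₂, hρ₂, i₂, hi₂, H₂⟩ := hc c₂ hc₂lt
  -- decode i₂ into a function D → Fin r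
  set f : Fin n → Fin r := finFunctionFinEquiv.symm ⟨i₂, hi₂⟩ with hfdef
  -- colouring of Emb(X₁,Z₁) via nearest element of D
  set c₁ : (X₁ →ₗ[ℝ] Z₁) → ℕ := fun φ₁ =>
    if h : φ₁ ∈ SEmb p₁ s₁ then
      (f (e ⟨(hDdense φ₁ h).choose, (hDdense φ₁ h).choose_spec.1⟩)).val
    else 0 with hc₁def
  have hc₁lt : ∀ φ ∈ SEmb p₁ s₁, c₁ φ < r := by
    intro φ hφ
    simp only [hc₁def, dif_pos hφ]
    exact (f _).isLt
  obtain ⟨ρ₁, hρ₁, i, hi, H₁⟩ := ha c₁ hc₁lt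
  refine ⟨ρ₁, hρ₁, ρ₂, hρ₂, i, hi, ?_⟩
  intro γ₁ hγ₁ γ₂ hγ₂
  obtain ⟨μ, hμ, hμc, hμd⟩ := H₁ γ₁ hγ₁
  obtain ⟨μ₂, hμ₂, hμ₂c, hμ₂d⟩ := H₂ γ₂ hγ₂
  set ψ := (hDdense μ hμ).choose with hψdef
  obtain ⟨hψD, hψclose⟩ := (hDdense μ hμ).choose_spec
  have hψS : ψ ∈ SEmb p₁ s₁ := hDsub _ hψD
  -- c₁ μ = f (e ⟨ψ, hψD⟩) = i
  have hfeq : (f (e ⟨ψ, hψD⟩)).val = i := by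
    have := hμc
    simpa only [hc₁def, dif_pos hμ] using this
  -- from c₂ μ₂ = i₂ deduce c (ψ, μ₂) = i
  have hkey : c (ψ, μ₂) = i := by
    have h1 : (finFunctionFinEquiv (fun k : Fin n =>
        (⟨c ((e.symm k : {x // x ∈ D}).1, μ₂),
          hcr _ (hDsub _ (e.symm k).2) _ hμ₂⟩ : Fin r))).val = i₂ := by
      have := hμ₂c
      simpa only [hc₂def, dif_pos hμ₂] using this
    have h2 : (fun k : Fin n =>
        (⟨c ((e.symm k : {x // x ∈ D}).1, μ₂),
          hcr _ (hDsub _ (e.symm k).2) _ hμ₂⟩ : Fin r)) = f := by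
      rw [hfdef, Equiv.eq_symm_apply]
      exact Fin.ext h1
    have h3 := congrFun h2 (e ⟨ψ, hψD⟩)
    have h4 : ((⟨c ((e.symm (e ⟨ψ, hψD⟩) : {x // x ∈ D}).1, μ₂),
        hcr _ (hDsub _ (e.symm (e ⟨ψ, hψD⟩)).2) _ hμ₂⟩ : Fin r)).val
        = (f (e ⟨ψ, hψD⟩)).val := congrArg Fin.val h3
    rw [← hfeq, ← h4]
    simp [Equiv.symm_apply_apply]
  refine ⟨ψ, hψS, μ₂, hμ₂, hkey, ?_, ?_⟩
  · intro a ha'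
    have h1 := hμd a ha'
    have h2 := hψclose a ha'
    have h3 : s₁ (ψ a - (ρ₁.comp γ₁) a)
        ≤ s₁ (ψ a - μ a) + s₁ (μ a - (ρ₁.comp γ₁) a) := by
      have := map_add_le_add s₁ (ψ a - μ a) (μ a - (ρ₁.comp γ₁) a)
      simpa [sub_add_sub_cancel] using this
    have h4 : s₁ (ψ a - μ a) = s₁ (μ a - ψ a) := by
      rw [← map_neg_eq_map s₁, neg_sub]
    linarith [h3, h4 ▸ h2]
  · intro a ha'
    have := hμ₂d a ha'
    linarith
end

section
/- Let n, r ∈ ℕ and ε > 0. Let X and Y be finite-dimensional real vector spaces with separating seminorm families (p_j)_{j<n} and (q_j)_{j<n}, and let Z₁,…,Z_n be finite-dimensional real normed spaces such that for every colouring ĉ : ∏_{j<n} Emb((X,p_j),Z_j) → {0,…,r−1} there exist ρ_j ∈ Emb((Y,q_j),Z_j) for j < n and a colour i < r such that ∏_{j<n} (ρ_j ∘ Emb((X,p_j),(Y,q_j))) is ε-monochromatic for ĉ with colour i. Let Z = ∏_{j<n} Z_j equipped with the seminorm family s_j(z₀,…,z_{n−1}) = ‖z_j‖ for j < n. Then every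 colouring c : Emb(X,Z) → {0,…,r−1} admits ρ ∈ Emb(Y,Z) and i < r with ρ ∘ Emb(X,Y) ⊆ (c⁻¹{i})_ε. -/
/-- `MEmb p s l` is the set of multi-isometric embeddings: injective linear maps
preserving the first `l` seminorms. -/
def MEmb {X Z : Type*} [AddCommGroup X] [Module ℝ X] [AddCommGroup Z] [Module ℝ Z]
    (p : ℕ → Seminorm ℝ X) (s : ℕ → Seminorm ℝ Z) (l : ℕ) : Set (X →ₗ[ℝ] Z) :=
  {φ | Function.Injective φ ∧ ∀ k < l, ∀ x, s k (φ x) = p k x}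

/-- `distLE p s l φ ψ ε` expresses that `d_k(φ,ψ) ≤ ε` for every `k < l`. -/
def distLE {X Z : Type*} [AddCommGroup X] [Module ℝ X] [AddCommGroup Z] [Module ℝ Z]
    (p : ℕ → Seminorm ℝ X) (s : ℕ → Seminorm ℝ Z) (l : ℕ)
    (φ ψ : X →ₗ[ℝ] Z) (ε : ℝ) : Prop :=
  ∀ k < l, ∀ x, p k x ≤ 1 → s k (φ x - ψ x) ≤ ε

/-- from the product Ramsey property of the coordinatewise embedding
spaces into normed spaces `Z j`, the product `Z = ∏ Z j` with seminorms
`s_j(z) = ‖z j‖` witnesses the discrete approximate Ramsey property for the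
multi-seminormed spaces `X` and `Y`. -/
theorem stmt_15 {X Y : Type} [AddCommGroup X] [Module ℝ X] [FiniteDimensional ℝ X]
    [AddCommGroup Y] [Module ℝ Y] [FiniteDimensional ℝ Y]
    (n r : ℕ) (ε : ℝ) (hε : 0 < ε)
    (p : ℕ → Seminorm ℝ X) (q : ℕ → Seminorm ℝ Y)
    (hpsep : ∀ x : X, x ≠ 0 → ∃ j < n, p j x ≠ 0)
    (hqsep : ∀ y : Y, y ≠ 0 → ∃ j < n, q j y ≠ 0)
    (Z : Fin n → Type) [∀ j, NormedAddCommGroup (Z j)] [∀ j, NormedSpace ℝ (Z j)]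
    [∀ j, FiniteDimensional ℝ (Z j)]
    (hprod : ∀ chat : (∀ j, X →ₗ[ℝ] Z j) → ℕ,
      (∀ φ : ∀ j, X →ₗ[ℝ] Z j, (∀ (j : Fin n) (x : X), ‖φ j x‖ = p j x) → chat φ < r) →
      ∃ ρ : ∀ j, Y →ₗ[ℝ] Z j, (∀ (j : Fin n) (y : Y), ‖ρ j y‖ = q j y) ∧
        ∃ i < r, ∀ γ : ∀ j : Fin n, X →ₗ[ℝ] Y,
          (∀ (j : Fin n) (x : X), q j (γ j x) = p j x) →
          ∃ μ : ∀ j, X →ₗ[ℝ] Z j, (∀ (j : Fin n) (x : X), ‖μ j x‖ = p j x) ∧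
            chat μ = i ∧
            ∀ (j : Fin n) (x : X), p j x ≤ 1 → ‖μ j x - ρ j (γ j x)‖ ≤ ε)
    (s : ℕ → Seminorm ℝ (∀ j, Z j))
    (hs : ∀ (j : ℕ) (hj : j < n) (z : ∀ j, Z j), s j z = ‖z ⟨j, hj⟩‖) :
    ∀ c : (X →ₗ[ℝ] ∀ j, Z j) → ℕ, (∀ φ ∈ MEmb p s n, c φ < r) →
      ∃ ρ ∈ MEmb q s n, ∃ i < r, ∀ η ∈ MEmb p q n,
        ∃ μ ∈ MEmb p s n, c μ = i ∧ distLE p s n (ρ.comp η) μ ε := by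
  intro c hc
  -- a tuple preserving norms gives a combined map in `MEmb p s n`
  have key : ∀ φ : ∀ j, X →ₗ[ℝ] Z j, (∀ (j : Fin n) (x : X), ‖φ j x‖ = p j x) →
      LinearMap.pi φ ∈ MEmb p s n := by
    intro φ hφ
    constructor
    · intro x y hxy
      by_contra hne
      obtain ⟨j, hj, hpj⟩ := hpsep (x - y) (sub_ne_zero.mpr hne)
      apply hpj
      have h1 : φ ⟨j, hj⟩ x = φ ⟨j, hj⟩ y := congrFun hxy ⟨j, hj⟩
      have h2 := hφ ⟨j, hj⟩ (x - y)
      rw [map_sub, sub_eq_zero.mpr h1] at h2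
      simpa using h2.symm
    · intro k hk x
      rw [hs k hk]
      exact hφ ⟨k, hk⟩ x
  set chat : (∀ j, X →ₗ[ℝ] Z j) → ℕ := fun φ => c (LinearMap.pi φ) with hchat
  obtain ⟨ρ, hρ, i, hi, hmono⟩ := hprod chat (fun φ hφ => hc _ (key φ hφ))
  refine ⟨LinearMap.pi ρ, ?_, i, hi, ?_⟩
  · constructor
    · intro x y hxy
      by_contra hne
      obtain ⟨j, hj, hqj⟩ := hqsep (x - y) (sub_ne_zero.mpr hne)
      apply hqj
      have h1 : ρ ⟨j, hj⟩ x = ρ ⟨j, hj⟩ y := congrFun hxy ⟨j, hj⟩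
      have h2 := hρ ⟨j, hj⟩ (x - y)
      rw [map_sub, sub_eq_zero.mpr h1] at h2
      simpa using h2.symm
    · intro k hk y
      rw [hs k hk]
      exact hρ ⟨k, hk⟩ y
  · intro η hη
    obtain ⟨μ, hμ, hcμ, hdist⟩ := hmono (fun _ => η) (fun j x => hη.2 j j.isLt x)
    refine ⟨LinearMap.pi μ, key μ hμ, hcμ, ?_⟩
    intro k hk x hx
    have := hdist ⟨k, hk⟩ x hx
    rw [hs k hk]
    simpa [norm_sub_rev] using this
end

section
/- Let n, r ∈ ℕ and ε > 0. Let X and Y be finite-dimensional real vector spaces with separating, nondecreasing (graded) seminorm families (p_j)_{j<n} and (q_j)_{j<n}, and let Z₁,…,Z_n be finite-dimensional real normed spaces such that for every colouring ĉ : ∏_{j<n} Emb((X,p_j),Z_j) → {0,…,r−1} there exist ρ_j ∈ Emb((Y,q_j),Z_j) for j < n and a colour i < r such that ∏_{j<n} (ρ_j ∘ Emb((X,p_j),(Y,q_j))) is ε-monochromatic for ĉ with colour i. Let Z = ∏_{j<n} Z_j equipped with the seminorm family s_j(z₀,…,z_{n−1}) = max_{i≤j} ‖z_i‖ for j < n.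 Then (s_j)_{j<n} is a nondecreasing family of seminorms, and every colouring c : Emb(X,Z) → {0,…,r−1} admits ρ ∈ Emb(Y,Z) and i < r with ρ ∘ Emb(X,Y) ⊆ (c⁻¹{i})_ε. -/
lemma chain_mono {W : Type*} [AddCommGroup W] [Module ℝ W] (n : ℕ) (p : ℕ → Seminorm ℝ W)
    (h : ∀ j : ℕ, j + 1 < n → ∀ x, p j x ≤ p (j + 1) x) :
    ∀ k < n, ∀ i ≤ k, ∀ x, p i x ≤ p k x := by
  intro k
  induction k with
  | zero => intro _ i hi x; simp [Nat.le_zero.mp hi]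
  | succ k ih =>
    intro hk i hi x
    rcases eq_or_lt_of_le hi with h' | h'
    · rw [h']
    · exact le_trans (ih (by omega) i (by omega) x) (h k hk x)

lemma pi_mem_MEmb {W : Type*} [AddCommGroup W] [Module ℝ W] {n : ℕ}
    (p : ℕ → Seminorm ℝ W) (Z : Fin n → Type) [∀ j, NormedAddCommGroup (Z j)]
    [∀ j, NormedSpace ℝ (Z j)] (s : ℕ → Seminorm ℝ (∀ j, Z j))
    (hs : ∀ (j : ℕ) (hj : j < n) (z : ∀ j, Z j),
      (∀ (i : ℕ) (hi : i ≤ j), ‖z ⟨i, lt_of_le_of_lt hi hj⟩‖ ≤ s j z) ∧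
      ∃ (i : ℕ) (hi : i ≤ j), s j z = ‖z ⟨i, lt_of_le_of_lt hi hj⟩‖)
    (hsep : ∀ x : W, x ≠ 0 → ∃ j < n, p j x ≠ 0)
    (hmono : ∀ k < n, ∀ i ≤ k, ∀ x, p i x ≤ p k x)
    (φ : ∀ j, W →ₗ[ℝ] Z j) (hφ : ∀ (j : Fin n) (x : W), ‖φ j x‖ = p j x) :
    LinearMap.pi φ ∈ MEmb p s n := by
  constructor
  · rw [injective_iff_map_eq_zero]
    intro x hx
    by_contra hx0
    obtain ⟨j, hj, hpj⟩ := hsep x hx0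
    apply hpj
    rw [← hφ ⟨j, hj⟩ x]
    have : φ ⟨j, hj⟩ x = 0 := by
      have := congrFun hx ⟨j, hj⟩
      simpa [LinearMap.pi_apply] using this
    simp [this]
  · intro k hk x
    obtain ⟨hle, i, hi, heq⟩ := hs k hk (LinearMap.pi φ x)
    apply le_antisymm
    · rw [heq]
      simp only [LinearMap.pi_apply]
      rw [hφ]
      exact hmono k hk i hi x
    · have := hle k le_rfl
      simpa [LinearMap.pi_apply, hφ ⟨k, hk⟩ x] using this

/-- the graded version of the product construction: the product
`Z = ∏ Z j` with the seminorms `s_j(z) = max_{i ≤ j} ‖z i‖` is graded and witnesses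
the discrete approximate Ramsey property for graded multi-seminormed `X` and `Y`. -/
theorem stmt_16 {X Y : Type} [AddCommGroup X] [Module ℝ X] [FiniteDimensional ℝ X]
    [AddCommGroup Y] [Module ℝ Y] [FiniteDimensional ℝ Y]
    (n r : ℕ) (ε : ℝ) (hε : 0 < ε)
    (p : ℕ → Seminorm ℝ X) (q : ℕ → Seminorm ℝ Y)
    (hpsep : ∀ x : X, x ≠ 0 → ∃ j < n, p j x ≠ 0)
    (hqsep : ∀ y : Y, y ≠ 0 → ∃ j < n, q j y ≠ 0)
    (hpgraded : ∀ j : ℕ, j + 1 < n → ∀ x : X, p j x ≤ p (j + 1) x)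
    (hqgraded : ∀ j : ℕ, j + 1 < n → ∀ y : Y, q j y ≤ q (j + 1) y)
    (Z : Fin n → Type) [∀ j, NormedAddCommGroup (Z j)] [∀ j, NormedSpace ℝ (Z j)]
    [∀ j, FiniteDimensional ℝ (Z j)]
    (hprod : ∀ chat : (∀ j, X →ₗ[ℝ] Z j) → ℕ,
      (∀ φ : ∀ j, X →ₗ[ℝ] Z j, (∀ (j : Fin n) (x : X), ‖φ j x‖ = p j x) → chat φ < r) →
      ∃ ρ : ∀ j, Y →ₗ[ℝ] Z j, (∀ (j : Fin n) (y : Y), ‖ρ j y‖ = q j y) ∧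
        ∃ i < r, ∀ γ : ∀ j : Fin n, X →ₗ[ℝ] Y,
          (∀ (j : Fin n) (x : X), q j (γ j x) = p j x) →
          ∃ μ : ∀ j, X →ₗ[ℝ] Z j, (∀ (j : Fin n) (x : X), ‖μ j x‖ = p j x) ∧
            chat μ = i ∧
            ∀ (j : Fin n) (x : X), p j x ≤ 1 → ‖μ j x - ρ j (γ j x)‖ ≤ ε)
    (s : ℕ → Seminorm ℝ (∀ j, Z j))
    -- `s j z = max_{i ≤ j} ‖z i‖` for `j < n`:
    (hs : ∀ (j : ℕ) (hj : j < n) (z : ∀ j, Z j),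
      (∀ (i : ℕ) (hi : i ≤ j), ‖z ⟨i, lt_of_le_of_lt hi hj⟩‖ ≤ s j z) ∧
      ∃ (i : ℕ) (hi : i ≤ j), s j z = ‖z ⟨i, lt_of_le_of_lt hi hj⟩‖) :
    (∀ j : ℕ, j + 1 < n → ∀ z : ∀ j, Z j, s j z ≤ s (j + 1) z) ∧
      ∀ c : (X →ₗ[ℝ] ∀ j, Z j) → ℕ, (∀ φ ∈ MEmb p s n, c φ < r) →
        ∃ ρ ∈ MEmb q s n, ∃ i < r, ∀ η ∈ MEmb p q n,
          ∃ μ ∈ MEmb p s n, c μ = i ∧ distLE p s n (ρ.comp η) μ ε := by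
  have hpmono := chain_mono n p hpgraded
  have hqmono := chain_mono n q hqgraded
  constructor
  · intro j hj z
    obtain ⟨_, i, hi, heq⟩ := hs j (by omega) z
    rw [heq]
    exact (hs (j + 1) hj z).1 i (by omega)
  · intro c hc
    obtain ⟨ρ, hρ, i, hir, H⟩ := hprod (fun φ => c (LinearMap.pi φ)) (fun φ hφ =>
      hc _ (pi_mem_MEmb p Z s hs hpsep hpmono φ hφ))
    refine ⟨LinearMap.pi ρ, pi_mem_MEmb q Z s hs hqsep hqmono ρ hρ, i, hir, ?_⟩
    intro η hη
    obtain ⟨μ, hμ, hμc, hμclose⟩ := H (fun _ => η) (fun j x => hη.2 j j.2 x)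
    refine ⟨LinearMap.pi μ, pi_mem_MEmb p Z s hs hpsep hpmono μ hμ, hμc, ?_⟩
    intro k hk x hx
    obtain ⟨_, i₀, hi₀, heq⟩ := hs k hk ((LinearMap.pi ρ).comp η x - LinearMap.pi μ x)
    rw [heq]
    simp only [Pi.sub_apply, LinearMap.comp_apply, LinearMap.pi_apply]
    rw [norm_sub_rev]
    exact hμclose ⟨i₀, lt_of_le_of_lt hi₀ hk⟩ x (le_trans (hpmono k hk i₀ hi₀ x) hx)
end
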